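/- arXiv:2306.17476 — 10 statements merged into one kernel-verified Lean document; each statement's English description precedes it below -/
import Mathlib

section
/- Copycat property: in a roundless register protocol, if configuration c1 can reach configuration c2 via a sequence of steps, and q2 is a state populated in c2, then there exists a state q1 populated in c1 such that the configuration obtained from c1 by adding one extra process in q1 can reach the configuration obtained from c2 by adding one extra process in q2. -/
/-- Actions of a roundless register protocol: read or write a symbol of `D`
on a register indexed by `R`. -/
inductive RLAct (R D : Type) : Type where
  | read (α : R) (a : D)
  | write (α : R) (a : D)

/-- Condition on register valuations `v`, `v'` for an action to fire. -/
def regCond {R D : Type} [DecidableEq R] (act : RLAct R D) (v v' : R → D) : Prop :=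
  match act with
  | .read α a => v α = a ∧ v' = v
  | .write α a => v' = Function.update v α a

/-- Concrete step: one process moves along a transition. -/
def CStep {Q R D : Type} [DecidableEq Q] [DecidableEq R]
    (Tr : Set (Q × RLAct R D × Q)) (c c' : (Q → ℕ) × (R → D)) : Prop :=
  ∃ q act q', (q, act, q') ∈ Tr ∧ 0 < c.1 q ∧
    c'.1 = (fun r => c.1 r - (if r = q then 1 else 0) + (if r = q' then 1 else 0)) ∧
    regCond act c.2 c'.2

/-- Abstract step: set-of-populated-states semantics, deserting or not. -/
def AStep {Q R D : Type} [DecidableEq R]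
    (Tr : Set (Q × RLAct R D × Q)) (a a' : Set Q × (R → D)) : Prop :=
  ∃ q act q', (q, act, q') ∈ Tr ∧ q ∈ a.1 ∧
    (a'.1 = a.1 ∪ {q'} ∨ a'.1 = (a.1 \ {q}) ∪ {q'}) ∧
    regCond act a.2 a'.2

/-- Support of a multiset of processes: the set of populated states. -/
def rlSupp {Q : Type} (μ : Q → ℕ) : Set Q := {q | 0 < μ q}

/-- Copycat property for roundless register protocols. -/
theorem copycat {Q R D : Type} [Fintype Q] [DecidableEq Q] [Fintype R] [DecidableEq R]
    [Fintype D]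
    (Tr : Set (Q × RLAct R D × Q))
    (c1 c2 : (Q → ℕ) × (R → D)) (q2 : Q)
    (hreach : Relation.ReflTransGen (CStep Tr) c1 c2)
    (hq2 : 0 < c2.1 q2) :
    ∃ q1, 0 < c1.1 q1 ∧
      Relation.ReflTransGen (CStep Tr)
        ((fun r => c1.1 r + if r = q1 then 1 else 0), c1.2)
        ((fun r => c2.1 r + if r = q2 then 1 else 0), c2.2) := by

  induction hreach generalizing q2 with
  | refl => exact ⟨q2, hq2, Relation.ReflTransGen.refl⟩
  | @tail b c hbc hstep ih =>
    obtain ⟨q, act, q', hT, hq, hμ, hreg⟩ := hstep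
    have hreg2 : regCond act c.2 c.2 := by
      cases act with
      | read α a =>
        obtain ⟨h1, h2⟩ := hreg
        exact ⟨by rw [h2]; exact h1, rfl⟩
      | write α a =>
        simp only [regCond] at hreg ⊢
        rw [hreg]; ext r; by_cases hr : r = α <;>
          simp [Function.update, hr]
    by_cases h : 0 < b.1 q2
    · obtain ⟨q1, h1, hr⟩ := ih q2 h
      refine ⟨q1, h1, hr.tail ?_⟩
      refine ⟨q, act, q', hT, by positivity, ?_, hreg⟩
      funext r
      simp only [hμ]
      rcases eq_or_ne r q with hrq | hrq <;>
        rcases eq_or_ne r q' with hrq' | hrq' <;>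
        rcases eq_or_ne r q2 with hr2 | hr2 <;>
        subst_eqs <;> simp_all <;> omega
    · -- q2 not populated in b, so q2 = q'
      have hq2' : q2 = q' := by
        by_contra hne
        rcases eq_or_ne q2 q with h2q | h2q
        · exact h (h2q ▸ hq)
        · rw [hμ] at hq2
          simp only [if_neg hne, if_neg h2q] at hq2
          omega
      subst hq2'
      obtain ⟨q1, h1, hr⟩ := ih q hq
      refine ⟨q1, h1, Relation.ReflTransGen.tail
        (Relation.ReflTransGen.tail hr
          (?_ : CStep Tr _ ((fun r => b.1 r + if r = q2 then 1 else 0), c.2))) ?_⟩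
      · -- first extra step: from b + [q] to (b.1 + [q'], c.2)
        refine ⟨q, act, q2, hT, by positivity, ?_, hreg⟩
        funext r
        rcases eq_or_ne r q with hrq | hrq <;>
          rcases eq_or_ne r q2 with hrq2 | hrq2 <;>
          subst_eqs <;> simp_all <;> omega
      · -- second: from (b.1 + [q2], c.2) to (c.1 + [q2], c.2)
        refine ⟨q, act, q2, hT, ?_, ?_, hreg2⟩
        · rcases eq_or_ne q q2 with e | e <;> simp [e] <;> omega
        · funext r
          simp only [hμ]
          rcases eq_or_ne r q with hrq | hrq <;>
            rcases eq_or_ne r q2 with hrq' | hrq' <;>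
            subst_eqs <;> simp_all <;> omega
end

section
/- In a roundless register protocol, any abstract execution can be concretized: if (S, v) →* (S', v') in the abstract semantics, then there exist concrete configurations c, c' with π(c) = (S, v), π(c') = (S', v'), and c →* c' in the concrete semantics. -/
lemma regCond_self {R D : Type} [DecidableEq R] {act : RLAct R D} {v v' : R → D}
    (h : regCond act v v') : regCond act v' v' := by
  cases act with
  | read α a => exact ⟨h.2 ▸ h.1, rfl⟩
  | write α a => simp only [regCond] at *; rw [h]; simp

lemma double_run {Q R D : Type} [DecidableEq Q] [DecidableEq R]
    (Tr : Set (Q × RLAct R D × Q)) (c c' : (Q → ℕ) × (R → D))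
    (h : Relation.ReflTransGen (CStep Tr) c c') :
    Relation.ReflTransGen (CStep Tr) (fun q => c.1 q + c.1 q, c.2)
      (fun q => c'.1 q + c'.1 q, c'.2) := by
  induction h with
  | refl => exact .refl
  | tail _ hstep ih =>
    rename_i b e _
    obtain ⟨q, act, q', htr, hpos, hμ, hreg⟩ := hstep
    have step1 : CStep Tr (fun r => b.1 r + b.1 r, b.2) (fun r => e.1 r + b.1 r, e.2) := by
      refine ⟨q, act, q', htr, by show 0 < b.1 q + b.1 q; omega,
        ?_, hreg⟩
      funext r
      simp only [hμ]
      rcases eq_or_ne r q with rfl | h1 <;> rcases eq_or_ne r q' with rfl | h2 <;>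
        simp_all <;> omega
    have step2 : CStep Tr (fun r => e.1 r + b.1 r, e.2) (fun r => e.1 r + e.1 r, e.2) := by
      refine ⟨q, act, q', htr, by show 0 < e.1 q + b.1 q; omega,
        ?_, regCond_self hreg⟩
      funext r
      simp only [hμ]
      rcases eq_or_ne r q with rfl | h1 <;> rcases eq_or_ne r q' with rfl | h2 <;>
        simp_all <;> omega
    exact (ih.tail step1).tail step2

lemma drain {Q R D : Type} [DecidableEq Q] [DecidableEq R]
    (Tr : Set (Q × RLAct R D × Q)) (q : Q) (act : RLAct R D) (q' : Q)
    (htr : (q, act, q') ∈ Tr) (μ : Q → ℕ) (v v' : R → D)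
    (hreg : regCond act v v') :
    ∀ k, 1 ≤ k → k ≤ μ q →
    Relation.ReflTransGen (CStep Tr) (μ, v)
      (fun r => μ r - (if r = q then k else 0) + (if r = q' then k else 0), v') := by
  intro k
  induction k with
  | zero => omega
  | succ k ih =>
    intro _ hk
    rcases Nat.lt_or_ge k 1 with h1 | h1
    · have hk0 : k = 0 := by omega
      subst hk0
      exact Relation.ReflTransGen.single ⟨q, act, q', htr, by show 0 < μ q; omega, rfl, hreg⟩
    · refine (ih h1 (by omega)).tail ?_
      refine ⟨q, act, q', htr, ?_, ?_, regCond_self hreg⟩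
      · show 0 < μ q - (if q = q then k else 0) + (if q = q' then k else 0)
        rw [if_pos rfl]
        rcases eq_or_ne q q' with rfl | h2
        · rw [if_pos rfl]; omega
        · rw [if_neg h2]; omega
      · funext r
        simp only
        rcases eq_or_ne r q with rfl | h1 <;> rcases eq_or_ne r q' with rfl | h2 <;>
          simp_all <;> omega

theorem abstract_to_concrete' {Q R D : Type} [DecidableEq Q]
    [DecidableEq R]
    (Tr : Set (Q × RLAct R D × Q))
    (a a' : Set Q × (R → D))
    (h : Relation.ReflTransGen (AStep Tr) a a') :
    ∃ c c' : (Q → ℕ) × (R → D),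
      (rlSupp c.1, c.2) = a ∧ (rlSupp c'.1, c'.2) = a' ∧
      Relation.ReflTransGen (CStep Tr) c c' := by
  classical
  induction h with
  | refl =>
    refine ⟨(fun q => if q ∈ a.1 then 1 else 0, a.2),
            (fun q => if q ∈ a.1 then 1 else 0, a.2), ?_, ?_, .refl⟩ <;>
    · rw [show a = (a.1, a.2) from rfl]
      simp only [Prod.mk.injEq]
      refine ⟨?_, by trivial⟩
      ext r; by_cases hr : r ∈ a.1 <;> simp [rlSupp, hr]
  | tail hab hstep ih =>
    rename_i b e
    obtain ⟨c₀, c₁, hc0, hc1, hrun⟩ := ih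
    obtain ⟨q, act, q', htr, hq, hS, hreg⟩ := hstep
    have hb1 : b.1 = rlSupp c₁.1 := (congrArg Prod.fst hc1).symm
    have hb2 : b.2 = c₁.2 := (congrArg Prod.snd hc1).symm
    set μ := c₁.1 with hμ
    have hq0 : 0 < μ q := by rw [hb1] at hq; exact hq
    have hreg' : regCond act c₁.2 e.2 := hb2 ▸ hreg
    rcases hS with hS | hS
    · -- non-deserting: double, then one step
      refine ⟨(fun r => c₀.1 r + c₀.1 r, c₀.2),
        (fun r => (μ r + μ r) - (if r = q then 1 else 0) + (if r = q' then 1 else 0), e.2),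
        ?_, ?_, ?_⟩
      · rw [← hc0]
        simp only [Prod.mk.injEq]
        refine ⟨?_, by trivial⟩
        ext r; simp only [rlSupp, Set.mem_setOf_eq]; omega
      · rw [show e = (e.1, e.2) from rfl]
        simp only [Prod.mk.injEq]
        refine ⟨?_, by trivial⟩
        rw [hS, hb1]
        ext r
        simp only [rlSupp, Set.mem_setOf_eq, Set.mem_union, Set.mem_singleton_iff]
        rcases eq_or_ne r q with rfl | h1 <;> rcases eq_or_ne r q' with rfl | h2 <;>
          simp_all <;> omega
      · refine (double_run Tr c₀ c₁ hrun).tail ?_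
        exact ⟨q, act, q', htr, by show 0 < μ q + μ q; omega, rfl, hreg'⟩
    · -- deserting: drain all of q
      refine ⟨c₀,
        (fun r => μ r - (if r = q then μ q else 0) + (if r = q' then μ q else 0), e.2),
        hc0, ?_, ?_⟩
      · rw [show e = (e.1, e.2) from rfl]
        simp only [Prod.mk.injEq]
        refine ⟨?_, by trivial⟩
        rw [hS, hb1]
        ext r
        simp only [rlSupp, Set.mem_setOf_eq, Set.mem_union, Set.mem_singleton_iff,
          Set.mem_diff]
        rcases eq_or_ne r q with rfl | h1 <;> rcases eq_or_ne r q' with rfl | h2 <;>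
          simp_all <;> omega
      · have := drain Tr q act q' htr μ c₁.2 e.2 hreg' (μ q) hq0 le_rfl
        rw [show (μ, c₁.2) = c₁ from rfl] at this
        exact hrun.trans this

/-- Any abstract execution can be concretized. -/
theorem abstract_to_concrete {Q R D : Type} [Fintype Q] [DecidableEq Q] [Fintype R]
    [DecidableEq R] [Fintype D]
    (Tr : Set (Q × RLAct R D × Q))
    (S S' : Set Q) (v v' : R → D)
    (h : Relation.ReflTransGen (AStep Tr) (S, v) (S', v')) :
    ∃ c c' : (Q → ℕ) × (R → D),
      (rlSupp c.1, c.2) = (S, v) ∧ (rlSupp c'.1, c'.2) = (S', v') ∧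
      Relation.ReflTransGen (CStep Tr) c c' := by
  exact abstract_to_concrete' Tr (S, v) (S', v') h
end

section
/- Soundness and completeness of the abstraction for roundless register protocols: for any set S ⊆ Q and register valuation v ∈ D^d, there exists a concrete configuration c reachable from some initial concrete configuration with supp(c) = S and register contents v, if and only if the abstract configuration (S, v) is reachable from some initial abstract configuration. -/
open Relation

variable {Q R D : Type}

lemma regCond_self_of_regCond [DecidableEq R] {act : RLAct R D} {v v' : R → D}
    (h : regCond act v v') : regCond act v' v' := by
  cases act with
  | read α a => exact ⟨h.2 ▸ h.1, rfl⟩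
  | write α a =>
    simp only [regCond] at h ⊢
    rw [h, Function.update_idem]

lemma rlSupp_nsmul {μ : Q → ℕ} {n : ℕ} (hn : n ≠ 0) : rlSupp (n • μ) = rlSupp μ := by
  ext r
  simp [rlSupp, Nat.pos_iff_ne_zero, hn]

lemma rlSupp_indicator_one (S : Set Q) : rlSupp (S.indicator 1) = S := by
  ext r
  by_cases hr : r ∈ S <;> simp [rlSupp, hr]

variable [DecidableEq Q] [DecidableEq R]

def moveProcs (μ : Q → ℕ) (q q' : Q) (m : ℕ) : Q → ℕ :=
  fun r => μ r - (if r = q then m else 0) + (if r = q' then m else 0)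

lemma nsmul_moveProcs (n : ℕ) (μ : Q → ℕ) (q q' : Q) (m : ℕ) :
    n • moveProcs μ q q' m = moveProcs (n • μ) q q' (n * m) := by
  funext r
  simp only [moveProcs, Pi.smul_apply, smul_eq_mul, mul_add, Nat.mul_sub, mul_ite, mul_zero]

lemma rlSupp_moveProcs_of_lt {μ : Q → ℕ} {q : Q} (q' : Q) {m : ℕ} (hm : 0 < m)
    (hmq : m < μ q) : rlSupp (moveProcs μ q q' m) = rlSupp μ ∪ {q'} := by
  ext r
  simp only [rlSupp, moveProcs, Set.mem_union, Set.mem_ofPred_eq, Set.mem_singleton_iff]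
  grind

lemma rlSupp_moveProcs_of_eq {μ : Q → ℕ} {q : Q} (q' : Q) {m : ℕ} (hm : 0 < m)
    (hmq : μ q = m) : rlSupp (moveProcs μ q q' m) = rlSupp μ \ {q} ∪ {q'} := by
  ext r
  simp only [rlSupp, moveProcs, Set.mem_union, Set.mem_sdiff, Set.mem_ofPred_eq,
    Set.mem_singleton_iff]
  grind

lemma reflTransGen_cStep_moveProcs {Tr : Set (Q × RLAct R D × Q)} {q q' : Q}
    {act : RLAct R D} (hT : (q, act, q') ∈ Tr) {c : (Q → ℕ) × (R → D)} {v' : R → D}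
    (hv : regCond act c.2 v') {m : ℕ} (hm : 0 < m) (hmq : m ≤ c.1 q) :
    ReflTransGen (CStep Tr) c (moveProcs c.1 q q' m, v') := by
  induction m, hm using Nat.le_induction with
  | base => exact .single ⟨q, act, q', hT, hmq, rfl, hv⟩
  | succ m hm ih =>
    refine (ih (by omega)).tail ⟨q, act, q', hT, ?_, ?_, regCond_self_of_regCond hv⟩
    · simp only [moveProcs]
      split_ifs <;> omega
    · funext r
      simp only [moveProcs]
      split_ifs <;> subst_vars <;> omega

lemma CStep.aStep_rlSupp {Tr : Set (Q × RLAct R D × Q)} {c c' : (Q → ℕ) × (R → D)}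
    (h : CStep Tr c c') : AStep Tr (rlSupp c.1, c.2) (rlSupp c'.1, c'.2) := by
  obtain ⟨q, act, q', hT, hpos, hc, hv⟩ := h
  refine ⟨q, act, q', hT, hpos, ?_, hv⟩
  change rlSupp c'.1 = _ ∨ rlSupp c'.1 = _
  rw [show c'.1 = moveProcs c.1 q q' 1 from hc]
  rcases Nat.lt_or_eq_of_le hpos with hlt | heq
  · exact .inl (rlSupp_moveProcs_of_lt q' one_pos hlt)
  · exact .inr (rlSupp_moveProcs_of_eq q' one_pos heq.symm)

lemma CStep.reflTransGen_nsmul {Tr : Set (Q × RLAct R D × Q)} {c c' : (Q → ℕ) × (R → D)}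
    (h : CStep Tr c c') (n : ℕ) (hn : 0 < n) :
    ReflTransGen (CStep Tr) (n • c.1, c.2) (n • c'.1, c'.2) := by
  obtain ⟨q, act, q', hT, hpos, hc, hv⟩ := h
  rw [show c'.1 = moveProcs c.1 q q' 1 from hc, nsmul_moveProcs, mul_one]
  exact reflTransGen_cStep_moveProcs (c := (n • c.1, c.2)) hT hv hn
    (Nat.le_mul_of_pos_right n hpos)

lemma reflTransGen_cStep_nsmul {Tr : Set (Q × RLAct R D × Q)} {c c' : (Q → ℕ) × (R → D)}
    (h : ReflTransGen (CStep Tr) c c') (n : ℕ) (hn : 0 < n) :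
    ReflTransGen (CStep Tr) (n • c.1, c.2) (n • c'.1, c'.2) :=
  h.lift' (fun c : (Q → ℕ) × (R → D) => (n • c.1, c.2))
    fun _ _ hstep => hstep.reflTransGen_nsmul n hn

lemma exists_cStep_run_of_aStep_run {Tr : Set (Q × RLAct R D × Q)} {S0 : Set Q} {v0 : R → D}
    {a : Set Q × (R → D)} (h : ReflTransGen (AStep Tr) (S0, v0) a) :
    ∃ c0 c : (Q → ℕ) × (R → D), rlSupp c0.1 = S0 ∧ c0.2 = v0 ∧
      ReflTransGen (CStep Tr) c0 c ∧ rlSupp c.1 = a.1 ∧ c.2 = a.2 := by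
  induction h with
  | refl => exact ⟨(S0.indicator 1, v0), _, rlSupp_indicator_one S0, rfl, .refl,
      rlSupp_indicator_one S0, rfl⟩
  | tail _ hstep ih =>
    obtain ⟨c0, c, hS0, hv0, hrun, hS, hv⟩ := ih
    obtain ⟨q, act, q', hT, hq, hS', hv'⟩ := hstep
    have hq0 : 0 < c.1 q := by rw [← hS] at hq; exact hq
    rcases hS' with hS' | hS'
    · have hq2 : 1 < (2 • c.1) q := by
        simp only [Pi.smul_apply, smul_eq_mul]
        omega
      refine ⟨(2 • c0.1, c0.2), (moveProcs (2 • c.1) q q' 1, _), ?_, hv0,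
        (reflTransGen_cStep_nsmul hrun 2 two_pos).trans
          (reflTransGen_cStep_moveProcs hT (hv ▸ hv') one_pos hq2.le), ?_, rfl⟩
      · rw [rlSupp_nsmul two_ne_zero, hS0]
      · rw [hS', rlSupp_moveProcs_of_lt q' one_pos hq2, rlSupp_nsmul two_ne_zero, hS]
    · exact ⟨c0, (moveProcs c.1 q q' (c.1 q), _), hS0, hv0,
        hrun.trans (reflTransGen_cStep_moveProcs hT (hv ▸ hv') hq0 le_rfl),
        by rw [hS', rlSupp_moveProcs_of_eq q' hq0 rfl, hS], rfl⟩

theorem soundcomplete_general {Q R D : Type} [DecidableEq Q] [DecidableEq R]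
    (Tr : Set (Q × RLAct R D × Q)) (Q0 : Set Q) (d0 : D)
    (S : Set Q) (v : R → D) :
    (∃ c0 c : (Q → ℕ) × (R → D),
        (rlSupp c0.1).Nonempty ∧ rlSupp c0.1 ⊆ Q0 ∧ c0.2 = (fun _ => d0) ∧
        Relation.ReflTransGen (CStep Tr) c0 c ∧ rlSupp c.1 = S ∧ c.2 = v) ↔
    (∃ S0 : Set Q, S0.Nonempty ∧ S0 ⊆ Q0 ∧
        Relation.ReflTransGen (AStep Tr) (S0, fun _ => d0) (S, v)) := by
  constructor
  · rintro ⟨c0, c, hne, hsub, hv0, hrun, rfl, rfl⟩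
    exact ⟨rlSupp c0.1, hne, hsub, hv0 ▸ hrun.lift _ fun _ _ => CStep.aStep_rlSupp⟩
  · rintro ⟨S0, hne, hsub, hrun⟩
    obtain ⟨c0, c, rfl, hv0, hc, hS, hv⟩ := exists_cStep_run_of_aStep_run hrun
    exact ⟨c0, c, hne, hsub, hv0, hc, hS, hv⟩

/-- Soundness and completeness of the abstraction for roundless register protocols. -/
theorem soundcomplete {Q R D : Type} [Fintype Q] [DecidableEq Q] [Fintype R]
    [DecidableEq R] [Fintype D]
    (Tr : Set (Q × RLAct R D × Q)) (Q0 : Set Q) (d0 : D)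
    (S : Set Q) (v : R → D) :
    (∃ c0 c : (Q → ℕ) × (R → D),
        (rlSupp c0.1).Nonempty ∧ rlSupp c0.1 ⊆ Q0 ∧ c0.2 = (fun _ => d0) ∧
        Relation.ReflTransGen (CStep Tr) c0 c ∧ rlSupp c.1 = S ∧ c.2 = v) ↔
    (∃ S0 : Set Q, S0.Nonempty ∧ S0 ⊆ Q0 ∧
        Relation.ReflTransGen (AStep Tr) (S0, fun _ => d0) (S, v)) :=
  soundcomplete_general Tr Q0 d0 S v
end

section
/- Saturation correctness for uninitialized coverability: in an uninitialized roundless register protocol, the set of coverable states equals the least fixed point S of the operator starting from Q0 that adds q2 whenever there is a transition (q1, write_α(a), q2) with q1 ∈ S, or a transition (q1, read_α(a), q2) with q1 ∈ S such that some transition (q3, write_α(a), q4) has q3, q4 ∈ S. A state q is coverable if some reachable abstract configuration (S', v') from an initial abstract configuration satisfies q ∈ S'. -/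
/-- A set of states closed under the saturation operator starting from `Q0`. -/
def SatClosed {Q R D : Type} (Tr : Set (Q × RLAct R D × Q)) (Q0 : Set Q) (S : Set Q) : Prop :=
  Q0 ⊆ S ∧
  (∀ q1 α a q2, q1 ∈ S → (q1, RLAct.write α a, q2) ∈ Tr → q2 ∈ S) ∧
  (∀ q1 α a q2, q1 ∈ S → (q1, RLAct.read α a, q2) ∈ Tr →
    (∃ q3 q4, q3 ∈ S ∧ q4 ∈ S ∧ (q3, RLAct.write α a, q4) ∈ Tr) → q2 ∈ S)



section Aux

variable {Q R D : Type} [DecidableEq R]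

/-- Replay lemma: a run can be replayed from a larger state set and any
valuation agreeing on non-`d0` registers. -/
lemma replay (Tr : Set (Q × RLAct R D × Q)) (d0 : D)
    (huninit : ∀ q α q', (q, RLAct.read α d0, q') ∉ Tr)
    {a a' : Set Q × (R → D)} (h : Relation.ReflTransGen (AStep Tr) a a') :
    ∀ B w, a.1 ⊆ B → (∀ α, a.2 α ≠ d0 → w α = a.2 α) →
      ∃ B' w', Relation.ReflTransGen (AStep Tr) (B, w) (B', w') ∧
        a'.1 ⊆ B' ∧ B ⊆ B' ∧ (∀ α, a'.2 α ≠ d0 → w' α = a'.2 α) := by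
  induction h with
  | refl => exact fun B w h1 h2 => ⟨B, w, .refl, h1, subset_rfl, h2⟩
  | tail hab hstep ih =>
    rename_i b c
    intro B w h1 h2
    obtain ⟨B1, w1, hreach, hb1, hBB1, hw1⟩ := ih B w h1 h2
    obtain ⟨q, act, q', hTr, hq, hset, hreg⟩ := hstep
    have hq1 : q ∈ B1 := hb1 hq
    have hc1 : c.1 ⊆ B1 ∪ {q'} := by
      rcases hset with h | h <;> rw [h]
      · exact Set.union_subset_union_left _ hb1
      · exact Set.union_subset_union_left _ (fun x hx => hb1 hx.1)
    cases act with
    | read α a =>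
      obtain ⟨hva, hv'⟩ := hreg
      have ha : a ≠ d0 := fun h => huninit q α q' (h ▸ hTr)
      have : w1 α = a := by rw [hw1 α (hva ▸ ha), hva]
      refine ⟨B1 ∪ {q'}, w1, hreach.tail ⟨q, .read α a, q', hTr, hq1, Or.inl rfl, this, rfl⟩,
        hc1, hBB1.trans Set.subset_union_left, ?_⟩
      intro β hβ
      rw [hv'] at hβ ⊢
      exact hw1 β hβ
    | write α a =>
      refine ⟨B1 ∪ {q'}, Function.update w1 α a,
        hreach.tail ⟨q, .write α a, q', hTr, hq1, Or.inl rfl, rfl⟩,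
        hc1, hBB1.trans Set.subset_union_left, ?_⟩
      intro β hβ
      rw [hreg] at hβ ⊢
      by_cases hβα : β = α
      · subst hβα; simp [Function.update]
      · rw [Function.update_of_ne hβα] at hβ
        rw [Function.update_of_ne hβα, Function.update_of_ne hβα]
        exact hw1 β hβ

/-- Invariant lemma: along any run, the populated states stay in a sat-closed
set, and every non-`d0` register value has a write witness in it. -/
lemma invariant (Tr : Set (Q × RLAct R D × Q)) (Q0 : Set Q) (d0 : D)
    (huninit : ∀ q α q', (q, RLAct.read α d0, q') ∉ Tr)
    (T : Set Q) (hT : SatClosed Tr Q0 T)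
    {a a' : Set Q × (R → D)} (h : Relation.ReflTransGen (AStep Tr) a a')
    (h1 : a.1 ⊆ T)
    (h2 : ∀ α, a.2 α ≠ d0 → ∃ q3 q4, q3 ∈ T ∧ q4 ∈ T ∧ (q3, RLAct.write α (a.2 α), q4) ∈ Tr) :
    a'.1 ⊆ T ∧
    (∀ α, a'.2 α ≠ d0 → ∃ q3 q4, q3 ∈ T ∧ q4 ∈ T ∧ (q3, RLAct.write α (a'.2 α), q4) ∈ Tr) := by
  obtain ⟨hT0, hTw, hTr'⟩ := hT
  induction h with
  | refl => exact ⟨h1, h2⟩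
  | tail hab hstep ih =>
    rename_i b c
    obtain ⟨hbT, hbw⟩ := ih
    obtain ⟨q, act, q', hTr2, hq, hset, hreg⟩ := hstep
    have hqT : q ∈ T := hbT hq
    have hq'T : q' ∈ T := by
      cases act with
      | read α a =>
        have ha : a ≠ d0 := fun h => huninit q α q' (h ▸ hTr2)
        have hwit := hbw α (hreg.1 ▸ ha)
        rw [hreg.1] at hwit
        exact hTr' q α a q' hqT hTr2 hwit
      | write α a => exact hTw q α a q' hqT hTr2
    have hcT : c.1 ⊆ T := by
      rcases hset with h | h <;> rw [h] <;>
        refine Set.union_subset ?_ (by simpa using hq'T)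
      · exact hbT
      · exact fun x hx => hbT hx.1
    refine ⟨hcT, ?_⟩
    cases act with
    | read α a =>
      rw [hreg.2]
      exact hbw
    | write α a =>
      intro β hβ
      rw [hreg] at hβ ⊢
      by_cases hβα : β = α
      · subst hβα
        simp only [Function.update_self] at hβ ⊢
        exact ⟨q, q', hqT, hq'T, hTr2⟩
      · rw [Function.update_of_ne hβα] at hβ ⊢
        exact hbw β hβ

end Aux

/-- Saturation correctness for uninitialized coverability: the set of coverable
states is the least fixed point of the saturation operator starting from `Q0`. -/
theorem saturation_correct {Q R D : Type} [Fintype Q] [DecidableEq Q] [Fintype R]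
    [DecidableEq R] [Fintype D]
    (Tr : Set (Q × RLAct R D × Q)) (Q0 : Set Q) (d0 : D)
    (huninit : ∀ q α q', (q, RLAct.read α d0, q') ∉ Tr)
    (hQ0 : Q0.Nonempty) :
    {q | ∃ S0 : Set Q, S0.Nonempty ∧ S0 ⊆ Q0 ∧
        ∃ (S' : Set Q) (v' : R → D),
          Relation.ReflTransGen (AStep Tr) (S0, fun _ => d0) (S', v') ∧ q ∈ S'} =
      sInf {S : Set Q | SatClosed Tr Q0 S} := by
  apply Set.Subset.antisymm
  · intro q hq
    obtain ⟨S0, hS0ne, hS0, S', v', hreach, hqS'⟩ := hq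
    rw [Set.sInf_eq_sInter, Set.mem_sInter]
    intro T hT
    have hinv := invariant Tr Q0 d0 huninit T hT hreach
      (hS0.trans hT.1) (fun α h => (h rfl).elim)
    exact hinv.1 hqS'
  · apply sInf_le
    refine ⟨?_, ?_, ?_⟩
    · intro q hq
      exact ⟨{q}, ⟨q, rfl⟩, Set.singleton_subset_iff.mpr hq, {q}, fun _ => d0,
        Relation.ReflTransGen.refl, rfl⟩
    · rintro q1 α a q2 ⟨S0, hne0, hsub0, S', v', hr1, hq1S⟩ hTr2
      exact ⟨S0, hne0, hsub0, S' ∪ {q2}, Function.update v' α a,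
        hr1.tail ⟨q1, .write α a, q2, hTr2, hq1S, Or.inl rfl, rfl⟩, Or.inr rfl⟩
    · rintro q1 α a q2 ⟨S0, hne0, hsub0, S', v', hr1, hq1S⟩ hTr2
        ⟨q3, q4, ⟨T0, hneT, hsubT, T', w'', hr2, hq3T⟩, _, hwTr⟩
      obtain ⟨B1, w1, hre1, hS'B1, hBB1, -⟩ :=
        replay Tr d0 huninit hr1 (S0 ∪ T0) (fun _ => d0)
          Set.subset_union_left (fun α h => (h rfl).elim)
      obtain ⟨B2, w2, hre2, hT'B2, hB1B2, -⟩ :=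
        replay Tr d0 huninit hr2 B1 w1
          ((Set.subset_union_right).trans hBB1) (fun α h => (h rfl).elim)
      have step1 : AStep Tr (B2, w2) (B2 ∪ {q4}, Function.update w2 α a) :=
        ⟨q3, .write α a, q4, hwTr, hT'B2 hq3T, Or.inl rfl, rfl⟩
      have step2 : AStep Tr (B2 ∪ {q4}, Function.update w2 α a)
          (B2 ∪ {q4} ∪ {q2}, Function.update w2 α a) :=
        ⟨q1, .read α a, q2, hTr2, Or.inl (hB1B2 (hS'B1 hq1S)), Or.inl rfl,
          Function.update_self α a w2, rfl⟩
      exact ⟨S0 ∪ T0, hne0.mono Set.subset_union_left, Set.union_subset hsub0 hsubT,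
        B2 ∪ {q4} ∪ {q2}, Function.update w2 α a,
        ((hre1.trans hre2).tail step1).tail step2, Or.inr rfl⟩
end

section
/- Execution decomposition for uninitialized single-register protocols: any abstract execution a0 →* a with a0 initial can be decomposed as a0 →* (S, b) →* a, where S is the set of all states appearing (populated at some point) in the original execution and b is the register content of a. -/
/-!
Two simulations of an execution `c₀ → c₁ → ⋯ → cₙ` in the abstract semantics. Replaying every
step without deserting, starting from `c₀`, accumulates all visited states:
`c₀ →* (c₀.1 ∪ ⋯ ∪ cₙ.1, cₙ.2)`. Conversely, from `(c₀.1 ∪ ⋯ ∪ cₙ.1, c₀.2)` each step can be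
replayed so as to land on `(cᵢ.1 ∪ ⋯ ∪ cₙ.1, cᵢ.2)`, ending in `cₙ`. To start this second
simulation with the final register content instead of `c₀.2 = d₀`, note that the first step of
the execution cannot read `d₀`, so it is a write, and with a single register a write overwrites
everything.
-/

variable {Q R D : Type}

def coveredStates (l : List (Set Q × (R → D))) : Set Q := {q | ∃ c ∈ l, q ∈ c.1}

@[simp]
lemma coveredStates_cons (c : Set Q × (R → D)) (l : List (Set Q × (R → D))) :
    coveredStates (c :: l) = c.1 ∪ coveredStates l := by
  ext q; simp [coveredStates]

@[simp]
lemma coveredStates_nil : coveredStates ([] : List (Set Q × (R → D))) = ∅ := by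
  simp [coveredStates]

lemma subset_coveredStates_cons (c : Set Q × (R → D)) (l : List (Set Q × (R → D))) :
    c.1 ⊆ coveredStates (c :: l) := fun _ hq => ⟨c, List.mem_cons_self, hq⟩

variable [DecidableEq R] {Tr : Set (Q × RLAct R D × Q)}

lemma AStep.union_left {S S' T : Set Q} {v v' : R → D} (h : AStep Tr (S, v) (S', v'))
    (hST : S ⊆ T) : AStep Tr (T, v) (T ∪ S', v') := by
  obtain ⟨q, act, q', htr, hq, hset, hreg⟩ := h
  refine ⟨q, act, q', htr, hST hq, Or.inl ?_, hreg⟩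
  change T ∪ S' = T ∪ {q'}
  rcases hset with rfl | rfl
  · rw [← Set.union_assoc, Set.union_eq_self_of_subset_right hST]
  · rw [← Set.union_assoc, Set.union_eq_self_of_subset_right (Set.sdiff_subset.trans hST)]

lemma AStep.union_right {S S' T : Set Q} {v v' : R → D} (h : AStep Tr (S, v) (S', v'))
    (hS'T : S' ⊆ T) : AStep Tr (S ∪ T, v) (T, v') := by
  obtain ⟨q, act, q', htr, hq, hset, hreg⟩ := h
  have hq' : {q'} ⊆ T := fun x hx => hS'T (by rcases hset with rfl | rfl <;> exact Or.inr hx)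
  have hdiff : S \ {q} ⊆ T := fun x hx => hS'T (by
    rcases hset with rfl | rfl
    exacts [Or.inl hx.1, Or.inl hx])
  refine ⟨q, act, q', htr, Or.inl hq, ?_, hreg⟩
  change T = S ∪ T ∪ {q'} ∨ T = (S ∪ T) \ {q} ∪ {q'}
  by_cases hqT : q ∈ T
  · have hS : S ⊆ T := by
      simpa [Set.insert_eq_of_mem hqT] using Set.sdiff_singleton_subset_iff.1 hdiff
    left
    rw [Set.union_eq_self_of_subset_left hS, Set.union_eq_self_of_subset_right hq']
  · right
    rw [Set.union_sdiff_distrib, Set.sdiff_singleton_eq_self hqT,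
      Set.union_eq_self_of_subset_left hdiff, Set.union_eq_self_of_subset_right hq']

lemma AStep.of_uninit [Subsingleton R] {d₀ : D}
    (huninit : ∀ q α q', (q, RLAct.read α d₀, q') ∉ Tr) {S : Set Q} {c' : Set Q × (R → D)}
    (h : AStep Tr (S, fun _ => d₀) c') (w : R → D) : AStep Tr (S, w) c' := by
  obtain ⟨q, act, q', htr, hq, hset, hreg⟩ := h
  refine ⟨q, act, q', htr, hq, hset, ?_⟩
  cases act with
  | read α b =>
    obtain rfl : d₀ = b := hreg.1
    exact absurd htr (huninit q α q')
  | write α b =>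
    change c'.2 = Function.update w α b
    rw [hreg, Function.update_eq_const_of_subsingleton, Function.update_eq_const_of_subsingleton]

lemma reflTransGen_union_coveredStates {c a : Set Q × (R → D)} {l : List (Set Q × (R → D))}
    (hchain : (c :: l).IsChain (AStep Tr)) (hlast : (c :: l).getLast? = some a) {T : Set Q}
    (hcT : c.1 ⊆ T) :
    Relation.ReflTransGen (AStep Tr) (T, c.2) (T ∪ coveredStates (c :: l), a.2) := by
  induction l generalizing c T with
  | nil =>
    obtain rfl : c = a := by simpa using hlast
    simpa [Set.union_eq_self_of_subset_right hcT] using .refl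
  | cons c₁ l ih =>
    obtain ⟨hstep, hchain⟩ := List.isChain_cons_cons.1 hchain
    have hrest := ih hchain (by simpa using hlast) (T := T ∪ c₁.1) Set.subset_union_right
    have hcovered : T ∪ c₁.1 ∪ coveredStates (c₁ :: l) = T ∪ coveredStates (c :: c₁ :: l) := by
      rw [coveredStates_cons c, ← Set.union_assoc, Set.union_eq_self_of_subset_right hcT,
        Set.union_assoc, Set.union_eq_right.2 (subset_coveredStates_cons c₁ l)]
    exact .head (hstep.union_left hcT) (hcovered ▸ hrest)

lemma reflTransGen_coveredStates {c a : Set Q × (R → D)} {l : List (Set Q × (R → D))}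
    (hchain : (c :: l).IsChain (AStep Tr)) (hlast : (c :: l).getLast? = some a) :
    Relation.ReflTransGen (AStep Tr) (coveredStates (c :: l), c.2) a := by
  induction l generalizing c with
  | nil =>
    obtain rfl : c = a := by simpa using hlast
    simpa using .refl
  | cons c₁ l ih =>
    obtain ⟨hstep, hchain⟩ := List.isChain_cons_cons.1 hchain
    rw [coveredStates_cons c]
    exact .head (hstep.union_right (subset_coveredStates_cons c₁ l))
      (ih hchain (by simpa using hlast))

theorem exec_decomposition_general {Q D : Type}
    (Tr : Set (Q × RLAct Unit D × Q)) (d0 : D)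
    (huninit : ∀ q α q', (q, RLAct.read α d0, q') ∉ Tr)
    (l : List (Set Q × (Unit → D)))
    (hchain : l.Chain' (AStep Tr))
    (a0 a : Set Q × (Unit → D))
    (hhead : l.head? = some a0)
    (hlast : l.getLast? = some a)
    (hinit : a0.2 = fun _ => d0) :
    Relation.ReflTransGen (AStep Tr) a0 ({q | ∃ c ∈ l, q ∈ c.1}, a.2) ∧
    Relation.ReflTransGen (AStep Tr) ({q | ∃ c ∈ l, q ∈ c.1}, a.2) a := by
  obtain ⟨l, rfl⟩ := List.head?_eq_some_iff.1 hhead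
  change Relation.ReflTransGen _ _ (coveredStates _, _) ∧
    Relation.ReflTransGen _ (coveredStates _, _) _
  constructor
  · have h := reflTransGen_union_coveredStates hchain hlast subset_rfl
    rwa [Set.union_eq_right.2 (subset_coveredStates_cons a0 l)] at h
  · cases l with
    | nil =>
      obtain rfl : a0 = a := by simpa using hlast
      simpa using .refl
    | cons a₁ l =>
      obtain ⟨hstep, hchain⟩ := List.isChain_cons_cons.1 hchain
      have hfirst := (hinit ▸ hstep.union_right (subset_coveredStates_cons a₁ l)).of_uninit
        huninit a.2
      rw [coveredStates_cons a0]
      exact .head hfirst (reflTransGen_coveredStates hchain (by simpa using hlast))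

/-- Execution decomposition for uninitialized single-register protocols:
one can first cover every state `S` appearing in the execution, then finish. -/
theorem exec_decomposition {Q D : Type} [Fintype Q] [DecidableEq Q] [Fintype D]
    (Tr : Set (Q × RLAct Unit D × Q)) (Q0 : Set Q) (d0 : D)
    (huninit : ∀ q α q', (q, RLAct.read α d0, q') ∉ Tr)
    (l : List (Set Q × (Unit → D)))
    (hchain : l.Chain' (AStep Tr))
    (a0 a : Set Q × (Unit → D))
    (hhead : l.head? = some a0)
    (hlast : l.getLast? = some a)
    (hne : a0.1.Nonempty) (hsub : a0.1 ⊆ Q0) (hinit : a0.2 = fun _ => d0) :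
    Relation.ReflTransGen (AStep Tr) a0 ({q | ∃ c ∈ l, q ∈ c.1}, a.2) ∧
    Relation.ReflTransGen (AStep Tr) ({q | ∃ c ∈ l, q ∈ c.1}, a.2) a :=
  exec_decomposition_general Tr d0 huninit l hchain a0 a hhead hlast hinit
end

section
/- 3-SAT reduction correctness for COVER: given a 3-CNF formula φ with clauses C1,…,Cm over variables x1,…,xn, the protocol P_φ (with registers r_l for each literal l, symbols {d0, T}, states q0 → C1? → … → Cm? → q_f through literal-testing gadgets) satisfies: the error state q_f is coverable if and only if φ is satisfiable. The gadget for literal l passes if register r_l holds T while r_{¬l} still holds d0; from q0 one may write T to any register; T can never be erased. -/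
/-- Negation of a literal `(variable, polarity)`. -/
def negLit {n : ℕ} (l : Fin n × Bool) : Fin n × Bool := (l.1, !l.2)

/-- States of the protocol `P_φ`: the chain `q0 = C1? → ... → Cm? → q_f`
(encoded as `Fin (m+1)`, with `q0 = Sum.inl 0` and `q_f = Sum.inl (Fin.last m)`),
plus one intermediate gadget state per clause and literal slot. -/
abbrev SatState (m : ℕ) := Fin (m + 1) ⊕ (Fin m × Fin 3)

/-- Transitions of `P_φ`: registers are indexed by literals (`Fin n × Bool`),
the alphabet is `Bool` with initial symbol `false` and symbol `T = true`.
From `q0` one may write `true` to any register; the gadget for literal `l`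
of clause `i` reads `true` from register `r_l` then `false` (i.e. `d0`)
from register `r_{¬l}`. -/
def satTr (n m : ℕ) (lit : Fin m → Fin 3 → Fin n × Bool) :
    Set (SatState m × RLAct (Fin n × Bool) Bool × SatState m) :=
  {t | (∃ l : Fin n × Bool, t = (Sum.inl 0, RLAct.write l true, Sum.inl 0)) ∨
       (∃ i s, t = (Sum.inl i.castSucc, RLAct.read (lit i s) true, Sum.inr (i, s))) ∨
       (∃ i s, t = (Sum.inr (i, s), RLAct.read (negLit (lit i s)) false, Sum.inl i.succ))}

section SatAux

variable {n m : ℕ} (lit : Fin m → Fin 3 → Fin n × Bool)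

lemma negLit_negLit (l : Fin n × Bool) : negLit (negLit l) = l := by
  simp [negLit]

lemma negLit_ne (l : Fin n × Bool) : l ≠ negLit l := by
  intro h
  have := congrArg Prod.snd h
  simp [negLit] at this

/-- Pairwise consistency of the chosen literals for the first `i` clauses. -/
def GdPW (g : Fin m → Fin 3) (i : ℕ) : Prop :=
  ∀ j k : Fin m, (j : ℕ) < i → (k : ℕ) < i → lit j (g j) ≠ negLit (lit k (g k))

/-- There is a consistent choice of literals for the first `i` clauses, all set
to `true` in `v`. -/
def Gd (v : Fin n × Bool → Bool) (i : ℕ) : Prop :=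
  ∃ g : Fin m → Fin 3, GdPW lit g i ∧ ∀ j : Fin m, (j : ℕ) < i → v (lit j (g j)) = true

/-- Invariant maintained by abstract steps of `P_φ`. -/
def SatInv (c : Set (SatState m) × (Fin n × Bool → Bool)) : Prop :=
  (∀ i : Fin (m + 1), Sum.inl i ∈ c.1 → Gd lit c.2 i.val) ∧
  (∀ (i : Fin m) (s : Fin 3), Sum.inr (i, s) ∈ c.1 →
      Gd lit c.2 i.val ∧ c.2 (lit i s) = true)

lemma gd_mono {v v' : Fin n × Bool → Bool} (hmono : ∀ l, v l = true → v' l = true)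
    {i : ℕ} (h : Gd lit v i) : Gd lit v' i := by
  obtain ⟨g, hPW, ht⟩ := h
  exact ⟨g, hPW, fun j hj => hmono _ (ht j hj)⟩

lemma gd_extend {v : Fin n × Bool → Bool} {i : Fin m} {s : Fin 3}
    {g : Fin m → Fin 3} (hPW : GdPW lit g i.val)
    (ht : ∀ j : Fin m, (j : ℕ) < i.val → v (lit j (g j)) = true)
    (hvl : v (lit i s) = true) (hfl : v (negLit (lit i s)) = false) :
    Gd lit v (i.val + 1) := by
  have hne : ∀ j : Fin m, (j : ℕ) < i.val → j ≠ i := by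
    intro j hj hji; subst hji; omega
  refine ⟨Function.update g i s, ?_, ?_⟩
  · intro j k hj hk heq
    have hj' : (j : ℕ) < i.val ∨ j = i := by
      rcases Nat.lt_succ_iff_lt_or_eq.mp hj with h | h
      · exact Or.inl h
      · exact Or.inr (Fin.ext h)
    have hk' : (k : ℕ) < i.val ∨ k = i := by
      rcases Nat.lt_succ_iff_lt_or_eq.mp hk with h | h
      · exact Or.inl h
      · exact Or.inr (Fin.ext h)
    rcases hj' with hj' | rfl <;> rcases hk' with hk' | rfl
    · rw [Function.update_of_ne (hne j hj'), Function.update_of_ne (hne k hk')] at heq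
      exact hPW j k hj' hk' heq
    · rw [Function.update_of_ne (hne j hj'), Function.update_self] at heq
      have h1 := ht j hj'
      rw [heq, hfl] at h1
      exact Bool.false_ne_true h1
    · rw [Function.update_of_ne (hne k hk'), Function.update_self] at heq
      have h2 : negLit (lit j s) = lit k (g k) := by
        rw [heq, negLit_negLit]
      have h1 := ht k hk'
      rw [← h2, hfl] at h1
      exact Bool.false_ne_true h1
    · rw [Function.update_self] at heq
      exact negLit_ne _ heq
  · intro j hj
    rcases Nat.lt_succ_iff_lt_or_eq.mp hj with h | h
    · rw [Function.update_of_ne (hne j h)]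
      exact ht j h
    · have : j = i := Fin.ext h
      subst this
      rw [Function.update_self]
      exact hvl

lemma mem_of_astep_set {Q : Type} {S S' : Set Q} {q q' : Q}
    (h : S' = S ∪ {q'} ∨ S' = (S \ {q}) ∪ {q'}) : ∀ x ∈ S', x ∈ S ∨ x = q' := by
  rcases h with rfl | rfl <;> intro x hx <;> simp at hx <;> tauto

lemma satInv_step {c c' : Set (SatState m) × (Fin n × Bool → Bool)}
    (hinv : SatInv lit c) (hstep : AStep (satTr n m lit) c c') : SatInv lit c' := by
  obtain ⟨q, act, q', htr, hq, hS', hreg⟩ := hstep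
  rcases htr with ⟨l, heq⟩ | ⟨i, s, heq⟩ | ⟨i, s, heq⟩
  · -- write l true at q0
    obtain ⟨rfl, rfl, rfl⟩ : q = Sum.inl 0 ∧ act = RLAct.write l true ∧ q' = Sum.inl 0 := by
      simpa [Prod.ext_iff] using heq
    have hv' : c'.2 = Function.update c.2 l true := hreg
    have hmono : ∀ r, c.2 r = true → c'.2 r = true := by
      intro r hr
      rw [hv']
      rcases eq_or_ne r l with rfl | hne
      · simp
      · rwa [Function.update_of_ne hne]
    constructor
    · intro i hi
      rcases mem_of_astep_set hS' _ hi with h | h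
      · exact gd_mono lit hmono (hinv.1 i h)
      · have : i = 0 := by simpa using h
        subst this
        exact ⟨fun _ => 0, fun j k hj => by simp at hj, fun j hj => by simp at hj⟩
    · intro i s hi
      rcases mem_of_astep_set hS' _ hi with h | h
      · obtain ⟨h1, h2⟩ := hinv.2 i s h
        exact ⟨gd_mono lit hmono h1, hmono _ h2⟩
      · simp at h
  · -- first read of clause i, slot s
    obtain ⟨rfl, rfl, rfl⟩ :
        q = Sum.inl i.castSucc ∧ act = RLAct.read (lit i s) true ∧ q' = Sum.inr (i, s) := by
      simpa [Prod.ext_iff] using heq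
    obtain ⟨hread, hveq⟩ : c.2 (lit i s) = true ∧ c'.2 = c.2 := hreg
    have hgd : Gd lit c.2 i.val := by simpa using hinv.1 i.castSucc hq
    constructor
    · intro j hj
      rcases mem_of_astep_set hS' _ hj with h | h
      · rw [hveq]; exact hinv.1 j h
      · simp at h
    · intro j t hj
      rcases mem_of_astep_set hS' _ hj with h | h
      · rw [hveq]; exact hinv.2 j t h
      · obtain ⟨rfl, rfl⟩ : j = i ∧ t = s := by simpa [Prod.ext_iff] using h
        rw [hveq]
        exact ⟨hgd, hread⟩
  · -- second read of clause i, slot s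
    obtain ⟨rfl, rfl, rfl⟩ :
        q = Sum.inr (i, s) ∧ act = RLAct.read (negLit (lit i s)) false ∧ q' = Sum.inl i.succ := by
      simpa [Prod.ext_iff] using heq
    obtain ⟨hread, hveq⟩ : c.2 (negLit (lit i s)) = false ∧ c'.2 = c.2 := hreg
    obtain ⟨⟨g, hPW, ht⟩, hvl⟩ := hinv.2 i s hq
    constructor
    · intro j hj
      rcases mem_of_astep_set hS' _ hj with h | h
      · rw [hveq]; exact hinv.1 j h
      · have : j = i.succ := by simpa using h
        subst this
        rw [hveq]
        have := gd_extend lit hPW ht hvl hread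
        simpa using this
    · intro j t hj
      rcases mem_of_astep_set hS' _ hj with h | h
      · rw [hveq]; exact hinv.2 j t h
      · simp at h

lemma satInv_reach {c c' : Set (SatState m) × (Fin n × Bool → Bool)}
    (h : Relation.ReflTransGen (AStep (satTr n m lit)) c c') (hinv : SatInv lit c) :
    SatInv lit c' := by
  induction h with
  | refl => exact hinv
  | tail _ hstep ih => exact satInv_step lit ih hstep

lemma writes_reach (ν : Fin n → Bool) (k : ℕ) (hk : k ≤ n) :
    Relation.ReflTransGen (AStep (satTr n m lit))
      (({Sum.inl 0} : Set (SatState m)), fun _ => false)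
      (({Sum.inl 0} : Set (SatState m)),
        fun l => decide ((l.1 : ℕ) < k ∧ ν l.1 = l.2)) := by
  induction k with
  | zero =>
    have : (fun l : Fin n × Bool => decide ((l.1 : ℕ) < 0 ∧ ν l.1 = l.2)) =
        (fun _ => false) := by
      funext l; simp
    rw [this]
  | succ k ih =>
    refine Relation.ReflTransGen.tail (ih (by omega)) ?_
    refine ⟨Sum.inl 0, RLAct.write (⟨k, by omega⟩, ν ⟨k, by omega⟩) true, Sum.inl 0,
      Or.inl ⟨_, rfl⟩, rfl, Or.inl (by simp), ?_⟩
    show (fun l : Fin n × Bool => decide ((l.1 : ℕ) < k + 1 ∧ ν l.1 = l.2)) =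
      Function.update (fun l : Fin n × Bool => decide ((l.1 : ℕ) < k ∧ ν l.1 = l.2))
        (⟨k, by omega⟩, ν ⟨k, by omega⟩) true
    funext l
    rcases eq_or_ne l (⟨k, by omega⟩, ν ⟨k, by omega⟩) with rfl | hne
    · simp
    · rw [Function.update_of_ne hne]
      rcases Nat.lt_trichotomy (l.1 : ℕ) k with h | h | h
      · simp only [decide_eq_decide]
        constructor <;> rintro ⟨h1, h2⟩ <;> exact ⟨by omega, h2⟩
      · have h1 : l.1 = ⟨k, by omega⟩ := Fin.ext h
        have h2 : ν l.1 ≠ l.2 := by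
          intro hc
          apply hne
          refine Prod.ext_iff.mpr ⟨h1, ?_⟩
          rw [← hc, h1]
        simp [h2]
      · simp only [decide_eq_decide]
        constructor <;> rintro ⟨h1, h2⟩ <;> exact ⟨by omega, h2⟩

lemma clauses_reach (v : Fin n × Bool → Bool)
    (hsat : ∀ i : Fin m, ∃ s : Fin 3, v (lit i s) = true ∧ v (negLit (lit i s)) = false)
    (k : ℕ) (hk : k ≤ m) :
    ∃ S : Set (SatState m), Sum.inl (⟨k, by omega⟩ : Fin (m + 1)) ∈ S ∧
      Relation.ReflTransGen (AStep (satTr n m lit))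
        (({Sum.inl 0} : Set (SatState m)), v) (S, v) := by
  induction k with
  | zero => exact ⟨{Sum.inl 0}, rfl, Relation.ReflTransGen.refl⟩
  | succ k ih =>
    obtain ⟨S, hmem, hrun⟩ := ih (by omega)
    set i : Fin m := ⟨k, by omega⟩ with hi
    obtain ⟨s, hvs, hvns⟩ := hsat i
    have step1 : AStep (satTr n m lit) (S, v) (S ∪ {Sum.inr (i, s)}, v) := by
      refine ⟨Sum.inl i.castSucc, RLAct.read (lit i s) true, Sum.inr (i, s),
        Or.inr (Or.inl ⟨i, s, rfl⟩), ?_, Or.inl rfl, hvs, rfl⟩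
      exact hmem
    have step2 : AStep (satTr n m lit)
        (S ∪ {Sum.inr (i, s)}, v) (S ∪ {Sum.inr (i, s)} ∪ {Sum.inl i.succ}, v) := by
      refine ⟨Sum.inr (i, s), RLAct.read (negLit (lit i s)) false, Sum.inl i.succ,
        Or.inr (Or.inr ⟨i, s, rfl⟩), ?_, Or.inl rfl, hvns, rfl⟩
      exact Or.inr rfl
    refine ⟨S ∪ {Sum.inr (i, s)} ∪ {Sum.inl i.succ}, ?_, ?_⟩
    · exact Or.inr rfl
    · exact (hrun.tail step1).tail step2

end SatAux

/-- Correctness of the 3-SAT reduction for COVER: `q_f` is coverable in `P_φ`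
iff the 3-CNF formula (clauses `i`, literal slots `s`, literal `lit i s`) is
satisfiable. -/
theorem sat_reduction_correct (n m : ℕ) (lit : Fin m → Fin 3 → Fin n × Bool) :
    (∃ S0 : Set (SatState m), S0.Nonempty ∧ S0 ⊆ {Sum.inl 0} ∧
        ∃ (S' : Set (SatState m)) (v' : Fin n × Bool → Bool),
          Relation.ReflTransGen (AStep (satTr n m lit)) (S0, fun _ => false) (S', v') ∧
          Sum.inl (Fin.last m) ∈ S') ↔
    (∃ ν : Fin n → Bool, ∀ i : Fin m, ∃ s : Fin 3, ν (lit i s).1 = (lit i s).2) := by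
  constructor
  · rintro ⟨S0, _, hsub, S', v', hrun, hmem⟩
    have hinit : SatInv lit (S0, fun _ => false) := by
      constructor
      · intro i hi
        have h0 : Sum.inl i = (Sum.inl 0 : SatState m) := hsub hi
        have hi0 : i = 0 := by simpa using h0
        subst hi0
        exact ⟨fun _ => 0, fun j k hj => by simp at hj, fun j hj => by simp at hj⟩
      · intro i s hi
        have h0 : Sum.inr (i, s) = (Sum.inl 0 : SatState m) := hsub hi
        simp at h0
    have hinv := satInv_reach lit hrun hinit
    have hgd : Gd lit v' m := by
      have := hinv.1 (Fin.last m) hmem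
      simpa using this
    obtain ⟨g, hPW, -⟩ := hgd
    refine ⟨fun x => decide (∃ j : Fin m, lit j (g j) = (x, true)), fun i => ⟨g i, ?_⟩⟩
    rcases hb : (lit i (g i)).2 with _ | _
    · -- chosen literal is negative
      apply decide_eq_false
      rintro ⟨j, hj⟩
      apply hPW j i j.isLt i.isLt
      rw [hj]
      have : negLit (lit i (g i)) = ((lit i (g i)).1, !(lit i (g i)).2) := rfl
      rw [this, hb]
      rfl
    · -- chosen literal is positive
      apply decide_eq_true
      exact ⟨i, by rw [← hb]⟩
  · rintro ⟨ν, hν⟩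
    set v : Fin n × Bool → Bool := fun l => decide ((l.1 : ℕ) < n ∧ ν l.1 = l.2) with hv
    have hsat : ∀ i : Fin m, ∃ s : Fin 3,
        v (lit i s) = true ∧ v (negLit (lit i s)) = false := by
      intro i
      obtain ⟨s, hs⟩ := hν i
      refine ⟨s, ?_, ?_⟩
      · simp only [hv, decide_eq_true_eq]
        exact ⟨(lit i s).1.isLt, hs⟩
      · simp only [hv, negLit, decide_eq_false_iff_not]
        rintro ⟨-, h⟩
        rw [hs] at h
        simp at h
    obtain ⟨S, hmemS, hrun2⟩ := clauses_reach lit v hsat m le_rfl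
    have hrun1 := writes_reach (m := m) lit ν n le_rfl
    refine ⟨{Sum.inl 0}, ⟨Sum.inl 0, rfl⟩, le_rfl, S, v, hrun1.trans hrun2, ?_⟩
    have : Fin.last m = (⟨m, by omega⟩ : Fin (m + 1)) := rfl
    rw [this]
    exact hmemS
end

section
/- Combining footprints into an execution: let K ∈ ℕ, w ≥ v−1, and suppose given footprints τ_k on rounds [k−w, k] for k ≤ K and footprints T_k on rounds [k−w, k+1] for k ≤ K−1 such that T_k projects to τ_k on [k−w, k] and to τ_{k+1} on [k−w+1, k+1]. Then there exists a single execution ρ whose footprint on rounds [k−w, k] equals τ_k for every k ≤ K. -/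
/-- Actions of a round-based register protocol with `d` registers per round:
`read i α a` reads symbol `a` from register `α` of round `k - i` (for a process
at round `k`), `write α a` writes to register `α` of the current round, and
`incr` increments the process's round. -/
inductive RAct (d : ℕ) (D : Type) : Type where
  | read (i : ℕ) (α : Fin d) (a : D)
  | write (α : Fin d) (a : D)
  | incr

/-- Abstract configurations: a set of populated locations `(state, round)`
together with the contents of every register `(round, index)`. -/
abbrev RConf (Q D : Type) (d : ℕ) := Set (Q × ℕ) × (ℕ × Fin d → D)

/-- A move: a transition together with the round at which it is taken. -/
abbrev RMove (Q D : Type) (d : ℕ) := (Q × RAct d D × Q) × ℕ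

/-- Update of the set of populated locations: non-deserting or deserting. -/
def locUpd {Q : Type} (L L' : Set (Q × ℕ)) (src dst : Q × ℕ) : Prop :=
  L' = L ∪ {dst} ∨ L' = (L \ {src}) ∪ {dst}

/-- Abstract step of a round-based register protocol via a given move. -/
def RStep {Q D : Type} {d : ℕ} (Tr : Set (Q × RAct d D × Q))
    (mv : RMove Q D d) (a a' : RConf Q D d) : Prop :=
  mv.1 ∈ Tr ∧ (mv.1.1, mv.2) ∈ a.1 ∧
  (match mv with
   | ((q, RAct.read i α s, q'), k) =>
       i ≤ k ∧ a.2 (k - i, α) = s ∧ a'.2 = a.2 ∧ locUpd a.1 a'.1 (q, k) (q', k)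
   | ((q, RAct.write α s, q'), k) =>
       a'.2 = Function.update a.2 (k, α) s ∧ locUpd a.1 a'.1 (q, k) (q', k)
   | ((q, RAct.incr, q'), k) =>
       a'.2 = a.2 ∧ locUpd a.1 a'.1 (q, k) (q', k + 1))

/-- A move has effect on round `k` when it is at round `k`, or is an
increment at round `k - 1`. -/
def hasEffect {Q D : Type} {d : ℕ} (mv : RMove Q D d) (k : ℕ) : Prop :=
  mv.2 = k ∨ (mv.1.2.1 = RAct.incr ∧ mv.2 + 1 = k)

/-- Round `r` belongs to the window of rounds `[j, k]`. -/
def InW (j k : ℤ) (r : ℕ) : Prop := j ≤ (r : ℤ) ∧ (r : ℤ) ≤ k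

instance (j k : ℤ) (r : ℕ) : Decidable (InW j k r) := by unfold InW; infer_instance

/-- Local configurations: locations of a window of rounds, and register
contents (`none` outside the window). -/
abbrev RLConf (Q D : Type) (d : ℕ) := Set (Q × ℕ) × (ℕ × Fin d → Option D)

/-- Projection of a configuration onto the window of rounds `[j, k]`. -/
def cproj {Q D : Type} {d : ℕ} (j k : ℤ) (a : RConf Q D d) : RLConf Q D d :=
  ({l ∈ a.1 | InW j k l.2}, fun r => if InW j k r.1 then some (a.2 r) else none)

/-- Projection of a local configuration onto a (smaller) window `[j, k]`. -/
def lproj {Q D : Type} {d : ℕ} (j k : ℤ) (c : RLConf Q D d) : RLConf Q D d :=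
  ({l ∈ c.1 | InW j k l.2}, fun r => if InW j k r.1 then c.2 r else none)

/-- Local step on the window `[j, k]`: existence of a global step whose
configurations project to the given local configurations. -/
def LocalStep {Q D : Type} {d : ℕ} (Tr : Set (Q × RAct d D × Q)) (j k : ℤ)
    (mv : RMove Q D d) (lam lam' : RLConf Q D d) : Prop :=
  ∃ a a', RStep Tr mv a a' ∧ cproj j k a = lam ∧ cproj j k a' = lam'

/-- A footprint: an alternating sequence of local configurations and moves,
given by a first local configuration and a list of (move, next configuration). -/
structure FP (Q D : Type) (d : ℕ) where
  first : RLConf Q D d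
  steps : List (RMove Q D d × RLConf Q D d)

/-- Validity of the step list of a footprint on the window `[j, k]`:
consecutive local configurations are linked by local steps and differ. -/
def FPValidFrom {Q D : Type} {d : ℕ} (Tr : Set (Q × RAct d D × Q)) (j k : ℤ) :
    RLConf Q D d → List (RMove Q D d × RLConf Q D d) → Prop
  | _, [] => True
  | c, (mv, c') :: rest => LocalStep Tr j k mv c c' ∧ c ≠ c' ∧ FPValidFrom Tr j k c' rest

/-- A valid footprint on the window `[j, k]`. -/
def FP.Valid {Q D : Type} {d : ℕ} (Tr : Set (Q × RAct d D × Q)) (j k : ℤ)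
    (f : FP Q D d) : Prop :=
  (∃ a : RConf Q D d, cproj j k a = f.first) ∧ FPValidFrom Tr j k f.first f.steps

open Classical in
/-- Remove stuttering steps (those whose configuration equals the previous one). -/
noncomputable def squash {α β : Type _} : β → List (α × β) → List (α × β)
  | _, [] => []
  | c, (mv, c') :: rest => if c' = c then squash c rest else (mv, c') :: squash c' rest

/-- Projection of a footprint onto the window `[j, k]`: project every local
configuration and remove stuttering steps. -/
noncomputable def FP.proj {Q D : Type} {d : ℕ} (j k : ℤ) (f : FP Q D d) : FP Q D d :=
  ⟨lproj j k f.first,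
   squash (lproj j k f.first) (f.steps.map (fun p => (p.1, lproj j k p.2)))⟩

/-- An execution: a first configuration and a list of (move, next configuration). -/
structure RExec (Q D : Type) (d : ℕ) where
  first : RConf Q D d
  steps : List (RMove Q D d × RConf Q D d)

/-- Validity of the step list of an execution. -/
def RExecValidFrom {Q D : Type} {d : ℕ} (Tr : Set (Q × RAct d D × Q)) :
    RConf Q D d → List (RMove Q D d × RConf Q D d) → Prop
  | _, [] => True
  | c, (mv, c') :: rest => RStep Tr mv c c' ∧ RExecValidFrom Tr c' rest

/-- A valid execution. -/
def RExec.Valid {Q D : Type} {d : ℕ} (Tr : Set (Q × RAct d D × Q))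
    (e : RExec Q D d) : Prop :=
  RExecValidFrom Tr e.first e.steps

/-- The footprint of an execution on the window `[j, k]`: project every
configuration and remove stuttering steps. -/
noncomputable def RExec.fp {Q D : Type} {d : ℕ} (j k : ℤ) (e : RExec Q D d) : FP Q D d :=
  ⟨cproj j k e.first,
   squash (cproj j k e.first) (e.steps.map (fun p => (p.1, cproj j k p.2)))⟩
/-!
The execution is built by induction on `K`. Suppose `ρ` has footprints `τ 0, …, τ n` and each of
its steps changes some round `≤ n`. Start from the configuration that agrees with `ρ` on rounds
`≤ n` and with a realization of `T n` above `n`, and walk through the steps of `ρ` and of `T n`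
simultaneously, guided by their common footprint `τ n` on the overlap `[n - w, n]`. A step of `ρ`
invisible on the overlap acts strictly below it and is replayed unchanged. A step of `T n`
invisible on the overlap acts on round `n + 1`, and since `v ≤ w + 1` everything it reads lies in
the window of `T n`, so it can be replayed too. The remaining steps are visible on the overlap on
both sides, hence come in the same order with the same moves, and are taken jointly. The result
keeps the footprints of `ρ` on all windows below `n + 1` and has the footprint of `T n` on
`[n - w + 1, n + 1]`.
-/

section Agreement

variable {Q D : Type} {d : ℕ}

def AgreeOn (S : Set ℕ) (a b : RConf Q D d) : Prop :=
  (∀ p : Q × ℕ, p.2 ∈ S → (p ∈ a.1 ↔ p ∈ b.1)) ∧ ∀ r : ℕ × Fin d, r.1 ∈ S → a.2 r = b.2 r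

variable {S S' : Set ℕ} {a b c : RConf Q D d}

theorem AgreeOn.symm (h : AgreeOn S a b) : AgreeOn S b a :=
  ⟨fun p hp => (h.1 p hp).symm, fun r hr => (h.2 r hr).symm⟩

theorem AgreeOn.trans (h : AgreeOn S a b) (h' : AgreeOn S b c) : AgreeOn S a c :=
  ⟨fun p hp => (h.1 p hp).trans (h'.1 p hp), fun r hr => (h.2 r hr).trans (h'.2 r hr)⟩

theorem AgreeOn.mono (h : AgreeOn S' a b) (hS : S ⊆ S') : AgreeOn S a b :=
  ⟨fun p hp => h.1 p (hS hp), fun r hr => h.2 r (hS hr)⟩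

theorem AgreeOn.union (h : AgreeOn S a b) (h' : AgreeOn S' a b) : AgreeOn (S ∪ S') a b :=
  ⟨fun p hp => hp.elim (h.1 p) (h'.1 p), fun r hr => hr.elim (h.2 r) (h'.2 r)⟩

theorem AgreeOn.of_subset_union {T : Set ℕ} (h : AgreeOn S a b) (h' : AgreeOn S' a b)
    (hT : T ⊆ S ∪ S') : AgreeOn T a b :=
  (h.union h').mono hT

theorem not_agreeOn_diff (h : ¬AgreeOn S a b) (h' : AgreeOn S' a b) :
    ¬AgreeOn (S \ S') a b :=
  fun hd => h ((hd.union h').mono (Set.subset_sdiff_union S S'))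

theorem cproj_eq_iff {j k : ℤ} : cproj j k a = cproj j k b ↔ AgreeOn {r | InW j k r} a b := by
  simp only [cproj, AgreeOn, Prod.ext_iff, Set.ext_iff, funext_iff, Set.mem_ofPred_eq]
  constructor
  · rintro ⟨hl, hr⟩
    refine ⟨fun p hp => ?_, fun r hr' => ?_⟩
    · simpa [hp] using hl p
    · simpa [hr'] using hr r
  · rintro ⟨hl, hr⟩
    refine ⟨fun p => ?_, fun r => ?_⟩
    · by_cases hp : InW j k p.2 <;> simp [hp, hl p]
    · by_cases hr' : InW j k r.1 <;> simp [hr', hr r]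

theorem lproj_cproj {j k j' k' : ℤ} (hj : j ≤ j') (hk : k' ≤ k) (a : RConf Q D d) :
    lproj j' k' (cproj j k a) = cproj j' k' a := by
  have hw : ∀ r, InW j' k' r → InW j k r := fun r h => ⟨hj.trans h.1, h.2.trans hk⟩
  simp only [lproj, cproj, Prod.mk.injEq, Set.ext_iff, funext_iff]
  refine ⟨fun p => ?_, fun r => ?_⟩
  · by_cases hp : InW j' k' p.2 <;> simp [hp, hw]
  · by_cases hr : InW j' k' r.1 <;> simp [hr, hw]

end Agreement

section Moves

variable {Q D : Type} {d : ℕ}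

namespace RMove

def src (mv : RMove Q D d) : Q × ℕ := (mv.1.1, mv.2)

def dst (mv : RMove Q D d) : Q × ℕ :=
  (mv.1.2.2, match mv.1.2.1 with | RAct.incr => mv.2 + 1 | _ => mv.2)

def updRegs (mv : RMove Q D d) (f : ℕ × Fin d → D) : ℕ × Fin d → D :=
  match mv.1.2.1 with
  | RAct.write α s => Function.update f (mv.2, α) s
  | _ => f

def ReadsOk (mv : RMove Q D d) (f : ℕ × Fin d → D) : Prop :=
  ∀ i α s, mv.1.2.1 = RAct.read i α s → i ≤ mv.2 ∧ f (mv.2 - i, α) = s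

theorem hasEffect_src (mv : RMove Q D d) : hasEffect mv mv.src.2 := Or.inl rfl

theorem hasEffect_dst (mv : RMove Q D d) : hasEffect mv mv.dst.2 := by
  obtain ⟨⟨q, act, q'⟩, k⟩ := mv
  cases act <;> simp [hasEffect, dst]

theorem le_of_hasEffect {mv : RMove Q D d} {r : ℕ} (h : hasEffect mv r) :
    mv.2 ≤ r ∧ r ≤ mv.2 + 1 := by
  rcases h with h | ⟨-, h⟩ <;> omega

theorem updRegs_apply_of_ne {mv : RMove Q D d} {f : ℕ × Fin d → D} {r : ℕ × Fin d}
    (hr : r.1 ≠ mv.2) : mv.updRegs f r = f r := by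
  obtain ⟨⟨q, act, q'⟩, k⟩ := mv
  cases act <;> simp only [updRegs]
  exact Function.update_of_ne (by rintro rfl; exact hr rfl) _ _

theorem updRegs_congr {mv : RMove Q D d} {f g : ℕ × Fin d → D} {r : ℕ × Fin d}
    (h : f r = g r) : mv.updRegs f r = mv.updRegs g r := by
  obtain ⟨⟨q, act, q'⟩, k⟩ := mv
  cases act with
  | write α s => simp only [updRegs, Function.update_apply]; split_ifs <;> simp [h]
  | read | incr => exact h

end RMove

theorem rstep_iff {Tr : Set (Q × RAct d D × Q)} {mv : RMove Q D d} {a a' : RConf Q D d} :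
    RStep Tr mv a a' ↔ mv.1 ∈ Tr ∧ mv.src ∈ a.1 ∧ mv.ReadsOk a.2 ∧
      a'.2 = mv.updRegs a.2 ∧ locUpd a.1 a'.1 mv.src mv.dst := by
  obtain ⟨⟨q, act, q'⟩, k⟩ := mv
  cases act <;> simp [RStep, RMove.src, RMove.dst, RMove.updRegs, RMove.ReadsOk, and_assoc]

end Moves

section Steps

variable {Q D : Type} {d : ℕ} {Tr : Set (Q × RAct d D × Q)} {mv : RMove Q D d}
  {S : Set ℕ} {a a' b b' : RConf Q D d}

theorem mem_of_locUpd {L L' : Set (Q × ℕ)} {s t p : Q × ℕ} (h : locUpd L L' s t) (hp : p ≠ s) :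
    p ∈ L' ↔ p = t ∨ p ∈ L := by
  rcases h with rfl | rfl <;> simp [hp]

theorem locUpd.exists_congr {L L' : Set (Q × ℕ)} {s t : Q × ℕ} (h : locUpd L L' s t)
    (M : Set (Q × ℕ)) :
    ∃ M', locUpd M M' s t ∧ ∀ p, (p ∈ L ↔ p ∈ M) → (p ∈ L' ↔ p ∈ M') := by
  rcases h with rfl | rfl
  · exact ⟨M ∪ {t}, Or.inl rfl, fun p hp => by simp [hp]⟩
  · exact ⟨(M \ {s}) ∪ {t}, Or.inr rfl, fun p hp => by simp [hp]⟩

theorem RStep.agreeOn_of_not_hasEffect (h : RStep Tr mv a a') :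
    AgreeOn {r | ¬hasEffect mv r} a a' := by
  obtain ⟨-, -, -, hreg, hloc⟩ := rstep_iff.1 h
  refine ⟨fun p hp => ?_, fun r hr => ?_⟩
  · have hs : p ≠ mv.src := fun e => hp (e ▸ mv.hasEffect_src)
    have ht : p ≠ mv.dst := fun e => hp (e ▸ mv.hasEffect_dst)
    simp [mem_of_locUpd hloc hs, ht]
  · rw [hreg, RMove.updRegs_apply_of_ne fun e => hr (Or.inl e.symm)]

theorem RStep.exists_hasEffect (h : RStep Tr mv a a') (hS : ¬AgreeOn S a a') :
    ∃ r ∈ S, hasEffect mv r := by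
  by_contra! hne
  exact hS (h.agreeOn_of_not_hasEffect.mono hne)

/-- The only freedom in a step along a given move is whether the source location is deserted. -/
theorem RStep.agreeOn_diff_src (h : RStep Tr mv a a') (h' : RStep Tr mv b b')
    (hab : AgreeOn S a b) : AgreeOn (S \ {mv.2}) a' b' := by
  obtain ⟨-, -, -, hreg, hloc⟩ := rstep_iff.1 h
  obtain ⟨-, -, -, hreg', hloc'⟩ := rstep_iff.1 h'
  refine ⟨fun p hp => ?_, fun r hr => ?_⟩
  · have hs : p ≠ mv.src := fun e => hp.2 (e ▸ rfl)
    rw [mem_of_locUpd hloc hs, mem_of_locUpd hloc' hs, hab.1 p hp.1]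
  · rw [hreg, hreg', RMove.updRegs_congr (hab.2 r hr.1)]

theorem RStep.exists_agreeOn (h : RStep Tr mv a a') (hab : AgreeOn S a b) (hsrc : mv.2 ∈ S)
    (hread : ∀ i α s, mv.1.2.1 = RAct.read i α s → i ≤ mv.2 → mv.2 - i ∈ S) :
    ∃ b', RStep Tr mv b b' ∧ AgreeOn S a' b' := by
  obtain ⟨hTr, hs, hr, hreg, hloc⟩ := rstep_iff.1 h
  obtain ⟨M', hM', hM'_iff⟩ := hloc.exists_congr b.1
  refine ⟨(M', mv.updRegs b.2), rstep_iff.2 ⟨hTr, (hab.1 _ hsrc).1 hs, ?_, rfl, hM'⟩, ?_, ?_⟩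
  · intro i α s hact
    obtain ⟨hi, hval⟩ := hr i α s hact
    exact ⟨hi, (hab.2 _ (hread i α s hact hi)).symm.trans hval⟩
  · exact fun p hp => hM'_iff p (hab.1 p hp)
  · exact fun r hr => by rw [hreg]; exact RMove.updRegs_congr (hab.2 r hr)

end Steps

section Footprints

variable {Q D : Type} {d : ℕ}

theorem squash_cons_self {α β : Type*} (c : β) (m : α) (l : List (α × β)) :
    squash c ((m, c) :: l) = squash c l := by
  simp [squash]

theorem squash_cons_of_ne {α β : Type*} {c c' : β} (m : α) (l : List (α × β)) (h : c' ≠ c) :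
    squash c ((m, c') :: l) = (m, c') :: squash c' l := by
  simp [squash, h]

variable {j k : ℤ} {m : RMove Q D d}

theorem RExec.fp_cons_of_eq {a a' : RConf Q D d} {l : List (RMove Q D d × RConf Q D d)}
    (h : cproj j k a' = cproj j k a) :
    (⟨a, (m, a') :: l⟩ : RExec Q D d).fp j k = (⟨a', l⟩ : RExec Q D d).fp j k := by
  simp only [RExec.fp, List.map_cons, h, squash_cons_self]

theorem RExec.fp_cons_of_ne {a a' : RConf Q D d} {l : List (RMove Q D d × RConf Q D d)}
    (h : cproj j k a' ≠ cproj j k a) :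
    (⟨a, (m, a') :: l⟩ : RExec Q D d).fp j k =
      ⟨cproj j k a, (m, cproj j k a') :: ((⟨a', l⟩ : RExec Q D d).fp j k).steps⟩ := by
  simp only [RExec.fp, List.map_cons, squash_cons_of_ne _ _ h]

theorem FP.proj_cons_of_eq {t t' : RLConf Q D d} {l : List (RMove Q D d × RLConf Q D d)}
    (h : lproj j k t' = lproj j k t) :
    (⟨t, (m, t') :: l⟩ : FP Q D d).proj j k = (⟨t', l⟩ : FP Q D d).proj j k := by
  simp only [FP.proj, List.map_cons, h, squash_cons_self]

theorem FP.proj_cons_of_ne {t t' : RLConf Q D d} {l : List (RMove Q D d × RLConf Q D d)}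
    (h : lproj j k t' ≠ lproj j k t) :
    (⟨t, (m, t') :: l⟩ : FP Q D d).proj j k =
      ⟨lproj j k t, (m, lproj j k t') :: ((⟨t', l⟩ : FP Q D d).proj j k).steps⟩ := by
  simp only [FP.proj, List.map_cons, squash_cons_of_ne _ _ h]

theorem RExec.fp_nil (a : RConf Q D d) :
    (⟨a, []⟩ : RExec Q D d).fp j k = ⟨cproj j k a, []⟩ := by
  simp [RExec.fp, squash]

theorem FP.proj_nil (t : RLConf Q D d) :
    (⟨t, []⟩ : FP Q D d).proj j k = ⟨lproj j k t, []⟩ := by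
  simp [FP.proj, squash]

theorem RExec.fp_cons_congr {a a' b b' : RConf Q D d} {l l' : List (RMove Q D d × RConf Q D d)}
    (h : cproj j k a = cproj j k b)
    (h' : (⟨a', l⟩ : RExec Q D d).fp j k = (⟨b', l'⟩ : RExec Q D d).fp j k) :
    (⟨a, (m, a') :: l⟩ : RExec Q D d).fp j k = (⟨b, (m, b') :: l'⟩ : RExec Q D d).fp j k := by
  have h₁ : cproj j k a' = cproj j k b' := congrArg FP.first h'
  by_cases e : cproj j k a' = cproj j k a
  · rw [RExec.fp_cons_of_eq e, RExec.fp_cons_of_eq (by rwa [← h, ← h₁]), h']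
  · rw [RExec.fp_cons_of_ne e, RExec.fp_cons_of_ne (by rwa [← h, ← h₁]), h, h₁, h']

theorem RExec.fp_cons_eq_proj_cons {a a' : RConf Q D d} {t t' : RLConf Q D d}
    {l : List (RMove Q D d × RConf Q D d)} {l' : List (RMove Q D d × RLConf Q D d)}
    (h : cproj j k a = lproj j k t)
    (h' : (⟨a', l⟩ : RExec Q D d).fp j k = (⟨t', l'⟩ : FP Q D d).proj j k) :
    (⟨a, (m, a') :: l⟩ : RExec Q D d).fp j k = (⟨t, (m, t') :: l'⟩ : FP Q D d).proj j k := by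
  have h₁ : cproj j k a' = lproj j k t' := congrArg FP.first h'
  by_cases e : cproj j k a' = cproj j k a
  · rw [RExec.fp_cons_of_eq e, FP.proj_cons_of_eq (by rwa [← h, ← h₁]), h']
  · rw [RExec.fp_cons_of_ne e, FP.proj_cons_of_ne (by rwa [← h, ← h₁]), h, h₁, h']

theorem RExec.fp_cons_eq_proj_cons_iff {a a' : RConf Q D d} {t t' : RLConf Q D d}
    {m' : RMove Q D d} {l : List (RMove Q D d × RConf Q D d)}
    {l' : List (RMove Q D d × RLConf Q D d)}
    (ha : cproj j k a' ≠ cproj j k a) (ht : lproj j k t' ≠ lproj j k t) :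
    (⟨a, (m, a') :: l⟩ : RExec Q D d).fp j k = (⟨t, (m', t') :: l'⟩ : FP Q D d).proj j k ↔
      cproj j k a = lproj j k t ∧ m = m' ∧
        (⟨a', l⟩ : RExec Q D d).fp j k = (⟨t', l'⟩ : FP Q D d).proj j k := by
  rw [RExec.fp_cons_of_ne ha, FP.proj_cons_of_ne ht]
  change _ ↔ _ ∧ _ ∧ FP.mk _ _ = FP.mk _ _
  simp only [FP.mk.injEq, List.cons.injEq, Prod.mk.injEq, and_assoc]
  rfl

end Footprints

section Realization

variable {Q D : Type} {d : ℕ} {Tr : Set (Q × RAct d D × Q)}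

def NoStutterOn (S : Set ℕ) : RConf Q D d → List (RMove Q D d × RConf Q D d) → Prop
  | _, [] => True
  | c, (_, c') :: rest => ¬AgreeOn S c c' ∧ NoStutterOn S c' rest

theorem NoStutterOn.mono {S S' : Set ℕ} (hS : S ⊆ S') :
    ∀ {c : RConf Q D d} {l : List (RMove Q D d × RConf Q D d)},
      NoStutterOn S c l → NoStutterOn S' c l
  | _, [], _ => trivial
  | _, _ :: _, ⟨h, hrest⟩ => ⟨fun h' => h (h'.mono hS), NoStutterOn.mono hS hrest⟩

/-- A window containing round `0` sees the source and all reads of every move that changes it. -/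
theorem exists_rexecValidFrom_of_fpValidFrom {j k : ℤ} (hj : j ≤ 0) :
    ∀ (fs : List (RMove Q D d × RLConf Q D d)) (b : RConf Q D d),
      FPValidFrom Tr j k (cproj j k b) fs →
      ∃ ns, RExecValidFrom Tr b ns ∧ NoStutterOn {r | InW j k r} b ns ∧
        (⟨b, ns⟩ : RExec Q D d).fp j k = ⟨cproj j k b, fs⟩
  | [], b, _ => ⟨[], trivial, trivial, RExec.fp_nil b⟩
  | (mv, c') :: fs, b, ⟨⟨a, a', hstep, ha, ha'⟩, hne, hrest⟩ => by
    obtain ⟨r, ⟨-, hrk⟩, heff⟩ := hstep.exists_hasEffect (S := {r | InW j k r})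
      (by rw [← cproj_eq_iff, ha, ha']; exact hne)
    have hr := mv.le_of_hasEffect heff
    obtain ⟨b', hb', hab'⟩ := hstep.exists_agreeOn (cproj_eq_iff.1 ha)
      (show InW j k mv.2 from ⟨by omega, by omega⟩)
      (fun i α s _ hi => show InW j k (mv.2 - i) from ⟨by omega, by omega⟩)
    have hb'c : cproj j k b' = c' := ha' ▸ cproj_eq_iff.2 hab'.symm
    obtain ⟨ns, hns, hnst, hfp⟩ := exists_rexecValidFrom_of_fpValidFrom hj fs b' (hb'c ▸ hrest)
    refine ⟨(mv, b') :: ns, ⟨hb', hns⟩, ⟨?_, hnst⟩, ?_⟩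
    · rw [← cproj_eq_iff, hb'c]; exact hne
    · rw [RExec.fp_cons_of_ne (hb'c ▸ Ne.symm hne), hfp, hb'c]

theorem FP.Valid.exists_rexec {j k : ℤ} (hj : j ≤ 0) {f : FP Q D d} (hf : f.Valid Tr j k) :
    ∃ ρ : RExec Q D d, ρ.Valid Tr ∧ NoStutterOn {r | InW j k r} ρ.first ρ.steps ∧
      ρ.fp j k = f := by
  obtain ⟨⟨a, ha⟩, hv⟩ := hf
  obtain ⟨ns, hns, hnst, hfp⟩ := exists_rexecValidFrom_of_fpValidFrom hj f.steps a (ha ▸ hv)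
  exact ⟨⟨a, ns⟩, hns, hnst, hfp.trans (by rw [ha])⟩

end Realization

section MergeSteps

variable {Q D : Type} {d v : ℕ} {Tr : Set (Q × RAct d D × Q)} {mv : RMove Q D d}
  {bo c b : RConf Q D d} {n w : ℕ}

theorem RStep.round_le_of_not_agreeOn_Iic (h : RStep Tr mv bo c)
    (hne : ¬AgreeOn (Set.Iic n) bo c) : mv.2 ≤ n := by
  obtain ⟨r, hr, heff⟩ := h.exists_hasEffect hne
  exact (mv.le_of_hasEffect heff).1.trans hr

theorem RStep.exists_step_of_agreeOn_Iic (h : RStep Tr mv bo c) (hne : ¬AgreeOn (Set.Iic n) bo c)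
    (hb : AgreeOn (Set.Iic n) bo b) : ∃ b', RStep Tr mv b b' ∧ AgreeOn (Set.Iic n) c b' :=
  have hmv := h.round_le_of_not_agreeOn_Iic hne
  h.exists_agreeOn hb hmv fun i _ _ _ _ => (Nat.sub_le _ i).trans hmv

theorem RStep.exists_step_below_window (h : RStep Tr mv bo c) (hne : ¬AgreeOn (Set.Iic n) bo c)
    (hO : cproj ((n : ℤ) - w) n c = cproj ((n : ℤ) - w) n bo) (hb : AgreeOn (Set.Iic n) bo b) :
    ∃ b', RStep Tr mv b b' ∧ AgreeOn (Set.Iic n) c b' ∧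
      cproj ((n : ℤ) - w) (n + 1) b' = cproj ((n : ℤ) - w) (n + 1) b := by
  obtain ⟨r, ⟨hrn, hrO⟩, heff⟩ :=
    h.exists_hasEffect (not_agreeOn_diff hne (cproj_eq_iff.1 hO).symm)
  have hr := mv.le_of_hasEffect heff
  obtain ⟨b', hb', hcb'⟩ := h.exists_step_of_agreeOn_Iic hne hb
  have hOI : {r : ℕ | InW ((n : ℤ) - w) n r} ⊆ Set.Iic n := fun r hr => Int.ofNat_le.1 hr.2
  refine ⟨b', hb', hcb', cproj_eq_iff.2 (AgreeOn.of_subset_union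
    (((hcb'.symm.mono hOI).trans (cproj_eq_iff.1 hO)).trans (hb.mono hOI))
    hb'.agreeOn_of_not_hasEffect.symm fun s hs => ?_)⟩
  by_cases hsn : s ≤ n
  · exact Or.inl ⟨hs.1, Int.ofNat_le.2 hsn⟩
  · refine Or.inr fun hs_eff => ?_
    have := mv.le_of_hasEffect hs_eff
    simp only [Set.mem_Iic, Set.mem_ofPred_eq, InW] at hrn hrO hs
    omega

theorem RStep.exists_step_of_localStep (h : RStep Tr mv bo c) (hne : ¬AgreeOn (Set.Iic n) bo c)
    (hb : AgreeOn (Set.Iic n) bo b) {t' : RLConf Q D d}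
    (ht : LocalStep Tr ((n : ℤ) - w) (n + 1) mv (cproj ((n : ℤ) - w) (n + 1) b) t')
    (hO : lproj ((n : ℤ) - w) n t' = cproj ((n : ℤ) - w) n c) :
    ∃ b', RStep Tr mv b b' ∧ AgreeOn (Set.Iic n) c b' ∧ cproj ((n : ℤ) - w) (n + 1) b' = t' := by
  obtain ⟨a, a', hstep, ha, rfl⟩ := ht
  have hmv := h.round_le_of_not_agreeOn_Iic hne
  obtain ⟨b', hb', hcb'⟩ := h.exists_step_of_agreeOn_Iic hne hb
  have hOI : {r : ℕ | InW ((n : ℤ) - w) n r} ⊆ Set.Iic n := fun r hr => Int.ofNat_le.1 hr.2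
  have ha'c : AgreeOn {r | InW ((n : ℤ) - w) n r} a' c := by
    rw [← cproj_eq_iff, ← hO, lproj_cproj le_rfl (by omega)]
  refine ⟨b', hb', hcb', (cproj_eq_iff.2 (AgreeOn.of_subset_union (ha'c.trans (hcb'.mono hOI))
    (hstep.agreeOn_diff_src hb' (cproj_eq_iff.1 ha)) fun s hs => ?_)).symm⟩
  by_cases hs' : s = mv.2
  · exact Or.inl ⟨hs.1, by rw [hs']; exact_mod_cast hmv⟩
  · exact Or.inr ⟨hs, hs'⟩

/-- A local step on `[n - w, n + 1]` that is invisible on `[n - w, n]` acts on round `n + 1`;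
since reads look back at most `v ≤ w + 1` rounds, it only depends on the window. -/
theorem LocalStep.exists_step_top_round
    (hvis : ∀ q i α s q', ((q, RAct.read i α s, q') : Q × RAct d D × Q) ∈ Tr → i ≤ v)
    (hw : v ≤ w + 1) {t' : RLConf Q D d}
    (h : LocalStep Tr ((n : ℤ) - w) (n + 1) mv (cproj ((n : ℤ) - w) (n + 1) b) t')
    (hne : cproj ((n : ℤ) - w) (n + 1) b ≠ t')
    (hO : lproj ((n : ℤ) - w) n t' = cproj ((n : ℤ) - w) n b) :
    ∃ b', RStep Tr mv b b' ∧ cproj ((n : ℤ) - w) (n + 1) b' = t' ∧ AgreeOn (Set.Iic n) b b' := by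
  obtain ⟨a, a', hstep, ha, rfl⟩ := h
  have hn : (n : ℤ) ≤ n + 1 := by omega
  have haO : AgreeOn {r | InW ((n : ℤ) - w) n r} a a' := by
    rw [← cproj_eq_iff, ← lproj_cproj le_rfl hn, ha, lproj_cproj le_rfl hn, ← hO,
      lproj_cproj le_rfl hn]
  obtain ⟨r, ⟨hrW, hrO⟩, heff⟩ := hstep.exists_hasEffect
    (not_agreeOn_diff (by rwa [← cproj_eq_iff, ha]) haO)
  have hr := mv.le_of_hasEffect heff
  simp only [Set.mem_ofPred_eq, InW] at hrW hrO
  have hread : ∀ i α s, mv.1.2.1 = RAct.read i α s → i ≤ mv.2 →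
      InW ((n : ℤ) - w) (n + 1) (mv.2 - i) := by
    intro i α s hact hi
    have hTr : (mv.1.1, mv.1.2.1, mv.1.2.2) ∈ Tr := (rstep_iff.1 hstep).1
    rw [hact] at hTr
    have hiv := hvis _ _ _ _ _ hTr
    have hmv : mv.2 = r := by
      rcases heff with h | ⟨hincr, -⟩
      · exact h
      · simp [hact] at hincr
    constructor <;> omega
  obtain ⟨b', hb', hab'⟩ := hstep.exists_agreeOn (cproj_eq_iff.1 ha)
    (show InW ((n : ℤ) - w) (n + 1) mv.2 by constructor <;> omega) hread
  have hb't' : cproj ((n : ℤ) - w) (n + 1) b' = cproj ((n : ℤ) - w) (n + 1) a' :=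
    (cproj_eq_iff.2 hab').symm
  refine ⟨b', hb', hb't', AgreeOn.of_subset_union (S := {r | InW ((n : ℤ) - w) n r}) ?_
    hb'.agreeOn_of_not_hasEffect fun s hs => ?_⟩
  · rw [← cproj_eq_iff, ← hO, ← hb't', lproj_cproj le_rfl hn]
  · by_cases hsw : (n : ℤ) - w ≤ s
    · exact Or.inl ⟨hsw, Int.ofNat_le.2 hs⟩
    · exact Or.inr fun hs_eff => by have := mv.le_of_hasEffect hs_eff; omega

end MergeSteps

section Merge

variable {Q D : Type} {d v : ℕ} {Tr : Set (Q × RAct d D × Q)}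

theorem AgreeOn.cproj_eq_of_le {n : ℕ} {j k : ℤ} {a b : RConf Q D d}
    (h : AgreeOn (Set.Iic n) a b) (hk : k ≤ n) : cproj j k a = cproj j k b :=
  cproj_eq_iff.2 (h.mono fun _ hr => Int.ofNat_le.1 (hr.2.trans hk))

def IsMerge (Tr : Set (Q × RAct d D × Q)) (n w : ℕ) (bo : RConf Q D d)
    (ρs : List (RMove Q D d × RConf Q D d)) (b : RConf Q D d)
    (ts : List (RMove Q D d × RLConf Q D d)) (ns : List (RMove Q D d × RConf Q D d)) : Prop :=
  RExecValidFrom Tr b ns ∧ NoStutterOn (Set.Iic (n + 1)) b ns ∧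
    (∀ j k : ℤ, k ≤ n → (⟨b, ns⟩ : RExec Q D d).fp j k = (⟨bo, ρs⟩ : RExec Q D d).fp j k) ∧
    (⟨b, ns⟩ : RExec Q D d).fp ((n : ℤ) - w + 1) (n + 1) =
      (⟨cproj ((n : ℤ) - w) (n + 1) b, ts⟩ : FP Q D d).proj ((n : ℤ) - w + 1) (n + 1)

variable {n w : ℕ} {bo b b' c : RConf Q D d} {mv : RMove Q D d} {t' : RLConf Q D d}
  {ρs : List (RMove Q D d × RConf Q D d)} {ts : List (RMove Q D d × RLConf Q D d)}
  {ns : List (RMove Q D d × RConf Q D d)}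

theorem lproj_cproj_succ (a : RConf Q D d) :
    lproj ((n : ℤ) - w + 1) (n + 1) (cproj ((n : ℤ) - w) (n + 1) a) =
      cproj ((n : ℤ) - w + 1) (n + 1) a :=
  lproj_cproj (by omega) le_rfl a

theorem IsMerge.nil (hb : AgreeOn (Set.Iic n) bo b) : IsMerge Tr n w bo [] b [] [] := by
  refine ⟨trivial, trivial, fun j k hk => ?_, ?_⟩
  · rw [RExec.fp_nil, RExec.fp_nil, hb.cproj_eq_of_le hk]
  · rw [RExec.fp_nil, FP.proj_nil, lproj_cproj_succ]

theorem IsMerge.cons_below (h : IsMerge Tr n w c ρs b' ts ns) (hstep : RStep Tr mv b b')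
    (hne : ¬AgreeOn (Set.Iic n) bo c) (hb : AgreeOn (Set.Iic n) bo b)
    (hcb' : AgreeOn (Set.Iic n) c b')
    (hW : cproj ((n : ℤ) - w) (n + 1) b' = cproj ((n : ℤ) - w) (n + 1) b) :
    IsMerge Tr n w bo ((mv, c) :: ρs) b ts ((mv, b') :: ns) := by
  obtain ⟨hns, hnst, hlow, hnew⟩ := h
  refine ⟨⟨hstep, hns⟩, ⟨fun h' => hne ?_, hnst⟩, fun j k hk => ?_, ?_⟩
  · exact (hb.trans (h'.mono (Set.Iic_subset_Iic.2 n.le_succ))).trans hcb'.symm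
  · exact RExec.fp_cons_congr (hb.cproj_eq_of_le hk).symm (hlow j k hk)
  · rw [RExec.fp_cons_of_eq (by rw [← lproj_cproj_succ, hW, lproj_cproj_succ]), hnew, hW]

theorem IsMerge.cons_top (h : IsMerge Tr n w bo ρs b' ts ns) (hstep : RStep Tr mv b b')
    (hbb' : AgreeOn (Set.Iic n) b b') (hbt' : cproj ((n : ℤ) - w) (n + 1) b' = t')
    (hne : cproj ((n : ℤ) - w) (n + 1) b ≠ t') :
    IsMerge Tr n w bo ρs b ((mv, t') :: ts) ((mv, b') :: ns) := by
  obtain ⟨hns, hnst, hlow, hnew⟩ := h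
  refine ⟨⟨hstep, hns⟩, ⟨fun h' => hne ?_, hnst⟩, fun j k hk => ?_, ?_⟩
  · rw [← hbt']
    exact cproj_eq_iff.2 (h'.mono fun r hr => by have := hr.2; simp only [Set.mem_Iic]; omega)
  · exact (RExec.fp_cons_of_eq (hbb'.cproj_eq_of_le hk).symm).trans (hlow j k hk)
  · exact RExec.fp_cons_eq_proj_cons (lproj_cproj_succ b).symm (hbt' ▸ hnew)

theorem IsMerge.cons_joint (h : IsMerge Tr n w c ρs b' ts ns) (hstep : RStep Tr mv b b')
    (hne : ¬AgreeOn (Set.Iic n) bo c) (hb : AgreeOn (Set.Iic n) bo b)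
    (hcb' : AgreeOn (Set.Iic n) c b') (hbt' : cproj ((n : ℤ) - w) (n + 1) b' = t') :
    IsMerge Tr n w bo ((mv, c) :: ρs) b ((mv, t') :: ts) ((mv, b') :: ns) := by
  obtain ⟨hns, hnst, hlow, hnew⟩ := h
  refine ⟨⟨hstep, hns⟩, ⟨fun h' => hne ?_, hnst⟩, fun j k hk => ?_, ?_⟩
  · exact (hb.trans (h'.mono (Set.Iic_subset_Iic.2 n.le_succ))).trans hcb'.symm
  · exact RExec.fp_cons_congr (hb.cproj_eq_of_le hk).symm (hlow j k hk)
  · exact RExec.fp_cons_eq_proj_cons (lproj_cproj_succ b).symm (hbt' ▸ hnew)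

theorem exists_isMerge
    (hvis : ∀ q i α s q', ((q, RAct.read i α s, q') : Q × RAct d D × Q) ∈ Tr → i ≤ v)
    (hw : v ≤ w + 1) (n : ℕ) (bo : RConf Q D d) (ρs : List (RMove Q D d × RConf Q D d))
    (b : RConf Q D d) (ts : List (RMove Q D d × RLConf Q D d))
    (hρ : RExecValidFrom Tr bo ρs) (hρs : NoStutterOn (Set.Iic n) bo ρs)
    (hb : AgreeOn (Set.Iic n) bo b)
    (ht : FPValidFrom Tr ((n : ℤ) - w) (n + 1) (cproj ((n : ℤ) - w) (n + 1) b) ts)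
    (halign : (⟨bo, ρs⟩ : RExec Q D d).fp ((n : ℤ) - w) n =
      (⟨cproj ((n : ℤ) - w) (n + 1) b, ts⟩ : FP Q D d).proj ((n : ℤ) - w) n) :
    ∃ ns, IsMerge Tr n w bo ρs b ts ns := by
  have hOW : ∀ a : RConf Q D d, lproj ((n : ℤ) - w) n (cproj ((n : ℤ) - w) (n + 1) a) =
      cproj ((n : ℤ) - w) n a := lproj_cproj le_rfl (by omega)
  by_cases hT : ∃ mv t' trest, ts = (mv, t') :: trest ∧
      lproj ((n : ℤ) - w) n t' = cproj ((n : ℤ) - w) n b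
  · obtain ⟨mv, t', trest, rfl, hinv⟩ := hT
    obtain ⟨hls, hne, htrest⟩ := ht
    obtain ⟨b', hb', hbt', hbb'⟩ := hls.exists_step_top_round hvis hw hne hinv
    obtain ⟨ns, hns⟩ := exists_isMerge hvis hw n bo ρs b' trest hρ hρs (hb.trans hbb')
      (hbt' ▸ htrest) (by rw [halign, FP.proj_cons_of_eq (hinv.trans (hOW b).symm), hbt'])
    exact ⟨_, hns.cons_top hb' hbb' hbt' hne⟩
  push Not at hT
  cases ρs with
  | nil =>
    cases ts with
    | nil => exact ⟨[], IsMerge.nil hb⟩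
    | cons t trest =>
      rw [RExec.fp_nil, FP.proj_cons_of_ne (by rw [hOW]; exact hT _ _ _ rfl)] at halign
      simp at halign
  | cons ρ ρrest =>
    obtain ⟨mv, c⟩ := ρ
    obtain ⟨hstep, hρrest⟩ := hρ
    obtain ⟨hne, hρsrest⟩ := hρs
    by_cases hinv : cproj ((n : ℤ) - w) n c = cproj ((n : ℤ) - w) n bo
    · obtain ⟨b', hb', hcb', hW⟩ := hstep.exists_step_below_window hne hinv hb
      obtain ⟨ns, hns⟩ := exists_isMerge hvis hw n c ρrest b' ts hρrest hρsrest hcb' (hW ▸ ht)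
        (by rw [hW, ← halign, RExec.fp_cons_of_eq hinv])
      exact ⟨_, hns.cons_below hb' hne hb hcb' hW⟩
    · cases ts with
      | nil =>
        rw [RExec.fp_cons_of_ne hinv, FP.proj_nil] at halign
        simp at halign
      | cons t trest =>
        obtain ⟨mv', t'⟩ := t
        obtain ⟨hls, -, htrest⟩ := ht
        obtain ⟨-, rfl, halign'⟩ := (RExec.fp_cons_eq_proj_cons_iff hinv
          (by rw [hOW]; exact hT _ _ _ rfl)).1 halign
        obtain ⟨b', hb', hcb', hbt'⟩ :=
          hstep.exists_step_of_localStep hne hb hls (congrArg FP.first halign').symm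
        obtain ⟨ns, hns⟩ := exists_isMerge hvis hw n c ρrest b' trest hρrest hρsrest hcb'
          (hbt' ▸ htrest) (hbt' ▸ halign')
        exact ⟨_, hns.cons_joint hb' hne hb hcb' hbt'⟩
termination_by ρs.length + ts.length

end Merge

section Extension

variable {Q D : Type} {d v : ℕ} {Tr : Set (Q × RAct d D × Q)}

def glue (n : ℕ) (a a' : RConf Q D d) : RConf Q D d :=
  ({p | if p.2 ≤ n then p ∈ a.1 else p ∈ a'.1}, fun r => if r.1 ≤ n then a.2 r else a'.2 r)

theorem agreeOn_glue_left (n : ℕ) (a a' : RConf Q D d) : AgreeOn (Set.Iic n) a (glue n a a') :=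
  ⟨fun p hp => by simp [glue, Set.mem_Iic.1 hp], fun r hr => by simp [glue, Set.mem_Iic.1 hr]⟩

theorem agreeOn_glue_right (n : ℕ) (a a' : RConf Q D d) : AgreeOn (Set.Ioi n) a' (glue n a a') :=
  ⟨fun p hp => by simp [glue, not_le.2 (Set.mem_Ioi.1 hp)],
    fun r hr => by simp [glue, not_le.2 (Set.mem_Ioi.1 hr)]⟩

theorem RExec.Valid.exists_extension
    (hvis : ∀ q i α s q', ((q, RAct.read i α s, q') : Q × RAct d D × Q) ∈ Tr → i ≤ v)
    {w : ℕ} (hw : v ≤ w + 1) {n : ℕ} {ρ : RExec Q D d} (hρ : ρ.Valid Tr)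
    (hρs : NoStutterOn (Set.Iic n) ρ.first ρ.steps) {T : FP Q D d}
    (hT : T.Valid Tr ((n : ℤ) - w) (n + 1))
    (halign : ρ.fp ((n : ℤ) - w) n = T.proj ((n : ℤ) - w) n) :
    ∃ ρ' : RExec Q D d, ρ'.Valid Tr ∧ NoStutterOn (Set.Iic (n + 1)) ρ'.first ρ'.steps ∧
      (∀ j k : ℤ, k ≤ n → ρ'.fp j k = ρ.fp j k) ∧
      ρ'.fp ((n : ℤ) - w + 1) (n + 1) = T.proj ((n : ℤ) - w + 1) (n + 1) := by
  obtain ⟨⟨a, ha⟩, hTv⟩ := hT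
  have hb := agreeOn_glue_left n ρ.first a
  have hba : cproj ((n : ℤ) - w) (n + 1) (glue n ρ.first a) = T.first := by
    have hO : AgreeOn {r | InW ((n : ℤ) - w) n r} ρ.first a := by
      rw [← cproj_eq_iff, ← lproj_cproj (k := n + 1) le_rfl (by omega) a, ha]
      exact congrArg FP.first halign
    rw [← ha, cproj_eq_iff]
    refine AgreeOn.of_subset_union ((hb.symm.mono fun r hr => Int.ofNat_le.1 hr.2).trans hO)
      (agreeOn_glue_right n ρ.first a).symm fun r hr => ?_
    by_cases hrn : r ≤ n
    · exact Or.inl ⟨hr.1, Int.ofNat_le.2 hrn⟩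
    · exact Or.inr (not_le.1 hrn)
  obtain ⟨ns, hns, hnst, hlow, hnew⟩ := exists_isMerge hvis hw n ρ.first ρ.steps
    (glue n ρ.first a) T.steps hρ hρs hb (hba ▸ hTv) (by rw [hba]; exact halign)
  exact ⟨⟨glue n ρ.first a, ns⟩, hns, hnst, hlow, by rw [hnew, hba]⟩

end Extension

/-- Combining footprints into an execution: compatible window footprints
`τ_k` on `[k-w, k]` (for `k ≤ K`, with `w ≥ v - 1`), linked by footprints
`T_k` on `[k-w, k+1]`, arise as the footprints of a single execution. -/
theorem combining_footprints {Q D : Type} {d v : ℕ}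
    (Tr : Set (Q × RAct d D × Q))
    (hvis : ∀ q i α s q', ((q, RAct.read i α s, q') : Q × RAct d D × Q) ∈ Tr → i ≤ v)
    (K w : ℕ) (hw : v ≤ w + 1)
    (τ T : ℕ → FP Q D d)
    (hτ : ∀ k, k ≤ K → (τ k).Valid Tr ((k : ℤ) - w) (k : ℤ))
    (hT : ∀ k, k + 1 ≤ K → (T k).Valid Tr ((k : ℤ) - w) ((k : ℤ) + 1))
    (hT1 : ∀ k, k + 1 ≤ K → (T k).proj ((k : ℤ) - w) (k : ℤ) = τ k)
    (hT2 : ∀ k, k + 1 ≤ K → (T k).proj ((k : ℤ) - w + 1) ((k : ℤ) + 1) = τ (k + 1)) :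
    ∃ ρ : RExec Q D d, ρ.Valid Tr ∧
      ∀ k, k ≤ K → ρ.fp ((k : ℤ) - w) (k : ℤ) = τ k := by
  suffices h : ∀ n ≤ K, ∃ ρ : RExec Q D d, ρ.Valid Tr ∧
      NoStutterOn (Set.Iic n) ρ.first ρ.steps ∧ ∀ k ≤ n, ρ.fp ((k : ℤ) - w) k = τ k by
    obtain ⟨ρ, hρ, -, hfp⟩ := h K le_rfl
    exact ⟨ρ, hρ, hfp⟩
  intro n
  induction n with
  | zero =>
    intro hK
    obtain ⟨ρ, hρ, hρs, hfp⟩ := (hτ 0 hK).exists_rexec (by simp)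
    refine ⟨ρ, hρ, hρs.mono fun r hr => Int.ofNat_le.1 hr.2, fun k hk => ?_⟩
    obtain rfl := Nat.le_zero.1 hk
    exact hfp
  | succ n ih =>
    intro hn
    obtain ⟨ρ, hρ, hρs, hfp⟩ := ih (by omega)
    obtain ⟨ρ', hρ', hρ's, hlow, hnew⟩ :=
      hρ.exists_extension hvis hw hρs (hT n hn) ((hfp n le_rfl).trans (hT1 n hn).symm)
    refine ⟨ρ', hρ', hρ's, fun k hk => ?_⟩
    rcases Nat.le_succ_iff.1 hk with hk | rfl
    · exact (hlow _ _ (Int.ofNat_le.2 hk)).trans (hfp k hk)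
    · rw [show ((n + 1 : ℕ) : ℤ) - w = (n : ℤ) - w + 1 by push_cast; ring, Nat.cast_succ, hnew,
        hT2 n hn]
end

section
/- Monotonicity of reachable supports in the concrete semantics: if in a roundless register protocol c →* c' and q' is populated in c', then for every n ≥ 1 there exist a state q populated in c and an execution from the configuration obtained from c by adding n processes in q to the configuration obtained from c' by adding n processes in q'. -/
lemma cstep_lift {Q R D : Type} [DecidableEq Q] [DecidableEq R]
    {Tr : Set (Q × RLAct R D × Q)} {c c' : (Q → ℕ) × (R → D)}
    (h : CStep Tr c c') (m : Q → ℕ) :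
    CStep Tr ((fun r => c.1 r + m r), c.2) ((fun r => c'.1 r + m r), c'.2) := by
  obtain ⟨q, act, q', hTr, hq, heq, hreg⟩ := h
  refine ⟨q, act, q', hTr, by positivity, ?_, hreg⟩
  funext r
  simp only [heq]
  rcases eq_or_ne r q with rfl | h1 <;> rcases eq_or_ne r q' with rfl | h2 <;>
    simp [*] <;> omega

lemma rtg_lift {Q R D : Type} [DecidableEq Q] [DecidableEq R]
    {Tr : Set (Q × RLAct R D × Q)} {c c' : (Q → ℕ) × (R → D)}
    (h : Relation.ReflTransGen (CStep Tr) c c') (m : Q → ℕ) :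
    Relation.ReflTransGen (CStep Tr)
      ((fun r => c.1 r + m r), c.2) ((fun r => c'.1 r + m r), c'.2) := by
  induction h with
  | refl => exact .refl
  | tail _ hs ih => exact ih.tail (cstep_lift hs m)

lemma fire_n {Q R D : Type} [DecidableEq Q] [DecidableEq R]
    {Tr : Set (Q × RLAct R D × Q)} {p p2 : Q} {act : RLAct R D} {v : R → D}
    (hTr : (p, act, p2) ∈ Tr) (hreg : regCond act v v) :
    ∀ (k : ℕ) (μ : Q → ℕ), Relation.ReflTransGen (CStep Tr)
      ((fun r => μ r + if r = p then k else 0), v)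
      ((fun r => μ r + if r = p2 then k else 0), v) := by
  intro k
  induction k with
  | zero => intro μ; simp only [ite_self, add_zero]; exact .refl
  | succ k ih =>
    intro μ
    refine Relation.ReflTransGen.head
      (b := (((fun r => (μ r + if r = p then (k+1) else 0) - (if r = p then 1 else 0)
        + (if r = p2 then 1 else 0)), v)))
      ⟨p, act, p2, hTr, by simp, rfl, hreg⟩ ?_
    have h1 : (fun r => (μ r + if r = p then (k+1) else 0) -
        (if r = p then 1 else 0) + (if r = p2 then 1 else 0))
        = (fun r => (fun s => μ s + if s = p2 then 1 else 0) r + if r = p then k else 0) := by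
      funext r
      rcases eq_or_ne r p with rfl | h1 <;> rcases eq_or_ne r p2 with rfl | h2 <;>
        simp [*] <;> omega
    rw [h1]
    have h2 : (fun r => (fun s => μ s + if s = p2 then 1 else 0) r + if r = p2 then k else 0)
        = (fun r => μ r + if r = p2 then (k+1) else 0) := by
      funext r; rcases eq_or_ne r p2 with rfl | h <;> simp [*] <;> omega
    exact h2 ▸ ih (fun s => μ s + if s = p2 then 1 else 0)

/-- main -/
theorem copycat_iterated {Q R D : Type} [Fintype Q] [DecidableEq Q] [Fintype R]
    [DecidableEq R] [Fintype D]
    (Tr : Set (Q × RLAct R D × Q))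
    (c c' : (Q → ℕ) × (R → D)) (q' : Q)
    (h : Relation.ReflTransGen (CStep Tr) c c')
    (hq' : 0 < c'.1 q') :
    ∀ n : ℕ, 1 ≤ n → ∃ q, 0 < c.1 q ∧
      Relation.ReflTransGen (CStep Tr)
        ((fun r => c.1 r + if r = q then n else 0), c.2)
        ((fun r => c'.1 r + if r = q' then n else 0), c'.2) := by
  intro n hn
  induction h using Relation.ReflTransGen.head_induction_on with
  | refl => exact ⟨q', hq', .refl⟩
  | head hs _ ih =>
    rename_i c b hb
    obtain ⟨q1, hbq1, run1⟩ := ih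
    by_cases hc : 0 < c.1 q1
    · exact ⟨q1, hc, (Relation.ReflTransGen.single
        (cstep_lift hs (fun r => if r = q1 then n else 0))).trans run1⟩
    · obtain ⟨p, act, p2, hTr, hp, hb1, hreg⟩ := hs
      have hq1p2 : q1 = p2 := by
        by_contra hne
        rw [hb1] at hbq1
        simp only [if_neg hne] at hbq1
        omega
      refine ⟨p, hp, ?_⟩
      have step1 := cstep_lift (⟨p, act, p2, hTr, hp, hb1, hreg⟩ :
        CStep Tr c b) (fun r => if r = p then n else 0)
      have run2 := fire_n hTr (regCond_self hreg) n b.1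
      rw [hq1p2] at run1
      exact (Relation.ReflTransGen.single step1).trans (run2.trans run1)
end

section
/- Register persistence invariant for the blue-modified protocol: in the protocol with single register, states {q0, A, B, C, q_f}, alphabet {d0, a, b, c}, initial state q0, and transitions q0 −read(c)→ B, B −read(d0)→ C, q0 −write(c)→ A, C −write(a)→ C, C −read(c)→ A, A −read(a)→ q_f, q_f −write(b)→ A, C −read(b)→ q_f, the state q_f is not coverable: no reachable abstract configuration populates q_f. -/
/-- The five states of the example protocol. -/
inductive St5 : Type where
  | q0 | A | B | C | qf
  deriving DecidableEq

/-- The four symbols of the example protocol. -/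
inductive Sym4 : Type where
  | d0 | a | b | c
  deriving DecidableEq

instance : Fintype St5 :=
  ⟨{St5.q0, St5.A, St5.B, St5.C, St5.qf}, by intro x; cases x <;> simp⟩

instance : Fintype Sym4 :=
  ⟨{Sym4.d0, Sym4.a, Sym4.b, Sym4.c}, by intro x; cases x <;> simp⟩

/-- Transitions of the blue-modified protocol (single register, index `Unit`). -/
def blueTr : Set (St5 × RLAct Unit Sym4 × St5) :=
  {(St5.q0, RLAct.read () Sym4.c, St5.B),
   (St5.B, RLAct.read () Sym4.d0, St5.C),
   (St5.q0, RLAct.write () Sym4.c, St5.A),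
   (St5.C, RLAct.write () Sym4.a, St5.C),
   (St5.C, RLAct.read () Sym4.c, St5.A),
   (St5.A, RLAct.read () Sym4.a, St5.qf),
   (St5.qf, RLAct.write () Sym4.b, St5.A),
   (St5.C, RLAct.read () Sym4.b, St5.qf)}

def blueInv (a : Set St5 × (Unit → Sym4)) : Prop :=
  St5.qf ∉ a.1 ∧ St5.C ∉ a.1 ∧ (a.2 () = Sym4.d0 ∨ a.2 () = Sym4.c) ∧
    (St5.B ∈ a.1 → a.2 () = Sym4.c)

lemma blueInv_step {a a' : Set St5 × (Unit → Sym4)} (h : AStep blueTr a a')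
    (hI : blueInv a) : blueInv a' := by
  obtain ⟨q, act, q', htr, hq, hS, hreg⟩ := h
  obtain ⟨hqf, hC, hx, hB⟩ := hI
  simp only [blueTr, Set.mem_insert_iff, Set.mem_singleton_iff] at htr
  simp only [Prod.mk.injEq] at htr
  rcases htr with ⟨rfl,rfl,rfl⟩|⟨rfl,rfl,rfl⟩|⟨rfl,rfl,rfl⟩|⟨rfl,rfl,rfl⟩|⟨rfl,rfl,rfl⟩|⟨rfl,rfl,rfl⟩|⟨rfl,rfl,rfl⟩|⟨rfl,rfl,rfl⟩
  · -- q0 read c → B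
    obtain ⟨hv, hv2⟩ := hreg
    refine ⟨?_, ?_, ?_, ?_⟩ <;> rcases hS with h|h <;> simp_all
  · -- B read d0 → C : impossible
    obtain ⟨hv, hv2⟩ := hreg
    exact absurd (hB hq ▸ hv) (by simp)
  · -- q0 write c → A
    have hv : a'.2 () = Sym4.c := by
      simp [regCond] at hreg; rw [hreg]; simp
    refine ⟨?_, ?_, Or.inr hv, fun _ => hv⟩ <;> rcases hS with h|h <;> simp_all
  · exact absurd hq hC
  · exact absurd hq hC
  · -- A read a : impossible
    obtain ⟨hv, hv2⟩ := hreg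
    rcases hx with h|h <;> simp_all
  · exact absurd hq hqf
  · exact absurd hq hC

/-- `q_f` is not coverable in the blue-modified protocol. -/
theorem blue_not_coverable :
    ∀ S0 : Set St5, S0.Nonempty → S0 ⊆ {St5.q0} →
      ∀ (S : Set St5) (x : Unit → Sym4),
        Relation.ReflTransGen (AStep blueTr) (S0, fun _ => Sym4.d0) (S, x) →
        St5.qf ∉ S := by
  intro S0 _ hsub S x h
  have h0 : blueInv (S0, fun _ => Sym4.d0) := by
    refine ⟨fun h => ?_, fun h => ?_, Or.inl rfl, fun h => ?_⟩ <;>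
      exact absurd (hsub h) (by simp)
  have key : ∀ p, Relation.ReflTransGen (AStep blueTr) (S0, fun _ => Sym4.d0) p →
      blueInv p := by
    intro p hp
    induction hp with
    | refl => exact h0
    | tail _ hstep ih => exact blueInv_step hstep ih
  exact (key (S, x) h).1
end

section
/- Non-coverability in a round-based protocol: in the round-based protocol with one register per round, visibility range 1, alphabet {d0, a, b}, initial state q0 with an incr self-loop, and transitions q0 −write(a)→ A, A −read^{-1}(d0)→ B, B −read^{-1}(a)→ C, C −write(b)→ q0, q0 −read^{-1}(b)→ D, D −read^{0}(d0)→ E, E −read^{0}(b)→ q_f, the state q_f is not coverable at any round: no reachable abstract configuration populates (q_f, k) for any k. -/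
/-- The seven states of the round-based example protocol. -/
inductive Q7 : Type where
  | q0 | A | B | C | D | E | qf
  deriving DecidableEq

/-- The three symbols of the round-based example protocol. -/
inductive Sym3 : Type where
  | d0 | a | b
  deriving DecidableEq

/-- Transitions of the round-based example protocol (one register per round,
visibility range 1). -/
def rbTr : Set (Q7 × RAct 1 Sym3 × Q7) :=
  {(Q7.q0, RAct.incr, Q7.q0),
   (Q7.q0, RAct.write 0 Sym3.a, Q7.A),
   (Q7.A, RAct.read 1 0 Sym3.d0, Q7.B),
   (Q7.B, RAct.read 1 0 Sym3.a, Q7.C),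
   (Q7.C, RAct.write 0 Sym3.b, Q7.q0),
   (Q7.q0, RAct.read 1 0 Sym3.b, Q7.D),
   (Q7.D, RAct.read 0 0 Sym3.d0, Q7.E),
   (Q7.E, RAct.read 0 0 Sym3.b, Q7.qf)}

/-- Invariant for the non-coverability proof. -/
def RBInv (c : RConf Q7 Sym3 1) : Prop :=
  ∀ k : ℕ,
    ((Q7.A, k) ∈ c.1 → c.2 (k, 0) ≠ Sym3.d0) ∧
    ((Q7.B, k) ∈ c.1 → c.2 (k, 0) ≠ Sym3.d0) ∧
    ((Q7.C, k) ∈ c.1 → c.2 (k, 0) ≠ Sym3.d0) ∧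
    ((Q7.D, k) ∈ c.1 → c.2 (k - 1, 0) ≠ Sym3.d0) ∧
    ((Q7.E, k) ∈ c.1 →
      c.2 (k - 1, 0) ≠ Sym3.d0 ∧ c.2 (k, 0) ≠ Sym3.b ∧
      (Q7.B, k) ∉ c.1 ∧ (Q7.C, k) ∉ c.1) ∧
    ((Q7.qf, k) ∉ c.1)

lemma mem_of_locUpd_s18 {Q : Type} {L L' : Set (Q × ℕ)} {src dst x : Q × ℕ}
    (h : locUpd L L' src dst) (hx : x ∈ L') : x ∈ L ∨ x = dst := by
  rcases h with rfl | rfl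
  · simp only [Set.mem_union, Set.mem_singleton_iff] at hx; exact hx
  · simp only [Set.mem_union, Set.mem_diff, Set.mem_singleton_iff] at hx; tauto

lemma upd_ne {w : ℕ × Fin 1 → Sym3} {p q : ℕ × Fin 1} {s v : Sym3}
    (hs : s ≠ v) (h : w q ≠ v) : Function.update w p s q ≠ v := by
  rcases eq_or_ne q p with rfl | hne
  · rwa [Function.update_self]
  · rwa [Function.update_of_ne hne]

lemma RBInv_step (a a' : RConf Q7 Sym3 1) (mv : RMove Q7 Sym3 1)
    (h : RStep rbTr mv a a') (hI : RBInv a) : RBInv a' := by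
  obtain ⟨⟨q, act, q'⟩, k₀⟩ := mv
  obtain ⟨htr, hsrc, hm⟩ := h
  simp only [rbTr, Set.mem_insert_iff, Set.mem_singleton_iff, Prod.mk.injEq] at htr
  rcases htr with ⟨rfl,rfl,rfl⟩|⟨rfl,rfl,rfl⟩|⟨rfl,rfl,rfl⟩|⟨rfl,rfl,rfl⟩|⟨rfl,rfl,rfl⟩|⟨rfl,rfl,rfl⟩|⟨rfl,rfl,rfl⟩|⟨rfl,rfl,rfl⟩
  -- case 1: q0 --incr--> q0
  · obtain ⟨hw, hupd⟩ := hm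
    intro k
    obtain ⟨h1, h2, h3, h4, h5, h6⟩ := hI k
    rw [hw]
    refine ⟨?_, ?_, ?_, ?_, ?_, ?_⟩
    · intro hx; rcases mem_of_locUpd_s18 hupd hx with hx | hx
      · exact h1 hx
      · exact absurd hx (by simp)
    · intro hx; rcases mem_of_locUpd_s18 hupd hx with hx | hx
      · exact h2 hx
      · exact absurd hx (by simp)
    · intro hx; rcases mem_of_locUpd_s18 hupd hx with hx | hx
      · exact h3 hx
      · exact absurd hx (by simp)
    · intro hx; rcases mem_of_locUpd_s18 hupd hx with hx | hx
      · exact h4 hx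
      · exact absurd hx (by simp)
    · intro hx; rcases mem_of_locUpd_s18 hupd hx with hx | hx
      · obtain ⟨e1, e2, e3, e4⟩ := h5 hx
        refine ⟨e1, e2, ?_, ?_⟩
        · intro hB; rcases mem_of_locUpd_s18 hupd hB with hB | hB
          · exact e3 hB
          · exact absurd hB (by simp)
        · intro hC; rcases mem_of_locUpd_s18 hupd hC with hC | hC
          · exact e4 hC
          · exact absurd hC (by simp)
      · exact absurd hx (by simp)
    · intro hx; rcases mem_of_locUpd_s18 hupd hx with hx | hx
      · exact h6 hx
      · exact absurd hx (by simp)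
  -- case 2: q0 --write a--> A
  · obtain ⟨hw, hupd⟩ := hm
    intro k
    obtain ⟨h1, h2, h3, h4, h5, h6⟩ := hI k
    rw [hw]
    refine ⟨?_, ?_, ?_, ?_, ?_, ?_⟩
    · intro hx; rcases mem_of_locUpd_s18 hupd hx with hx | hx
      · exact upd_ne (by decide) (h1 hx)
      · rw [Prod.mk.injEq] at hx; obtain ⟨-, rfl⟩ := hx
        rw [Function.update_self]; decide
    · intro hx; rcases mem_of_locUpd_s18 hupd hx with hx | hx
      · exact upd_ne (by decide) (h2 hx)
      · exact absurd hx (by simp)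
    · intro hx; rcases mem_of_locUpd_s18 hupd hx with hx | hx
      · exact upd_ne (by decide) (h3 hx)
      · exact absurd hx (by simp)
    · intro hx; rcases mem_of_locUpd_s18 hupd hx with hx | hx
      · exact upd_ne (by decide) (h4 hx)
      · exact absurd hx (by simp)
    · intro hx; rcases mem_of_locUpd_s18 hupd hx with hx | hx
      · obtain ⟨e1, e2, e3, e4⟩ := h5 hx
        refine ⟨upd_ne (by decide) e1, upd_ne (by decide) e2, ?_, ?_⟩
        · intro hB; rcases mem_of_locUpd_s18 hupd hB with hB | hB
          · exact e3 hB
          · exact absurd hB (by simp)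
        · intro hC; rcases mem_of_locUpd_s18 hupd hC with hC | hC
          · exact e4 hC
          · exact absurd hC (by simp)
      · exact absurd hx (by simp)
    · intro hx; rcases mem_of_locUpd_s18 hupd hx with hx | hx
      · exact h6 hx
      · exact absurd hx (by simp)
  -- case 3: A --read^{-1} d0--> B
  · obtain ⟨hik, hrd, hw, hupd⟩ := hm
    intro k
    obtain ⟨h1, h2, h3, h4, h5, h6⟩ := hI k
    rw [hw]
    refine ⟨?_, ?_, ?_, ?_, ?_, ?_⟩
    · intro hx; rcases mem_of_locUpd_s18 hupd hx with hx | hx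
      · exact h1 hx
      · exact absurd hx (by simp)
    · intro hx; rcases mem_of_locUpd_s18 hupd hx with hx | hx
      · exact h2 hx
      · rw [Prod.mk.injEq] at hx; obtain ⟨-, rfl⟩ := hx
        exact (hI k).1 hsrc
    · intro hx; rcases mem_of_locUpd_s18 hupd hx with hx | hx
      · exact h3 hx
      · exact absurd hx (by simp)
    · intro hx; rcases mem_of_locUpd_s18 hupd hx with hx | hx
      · exact h4 hx
      · exact absurd hx (by simp)
    · intro hx; rcases mem_of_locUpd_s18 hupd hx with hx | hx
      · obtain ⟨e1, e2, e3, e4⟩ := h5 hx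
        refine ⟨e1, e2, ?_, ?_⟩
        · intro hB; rcases mem_of_locUpd_s18 hupd hB with hB | hB
          · exact e3 hB
          · rw [Prod.mk.injEq] at hB; obtain ⟨-, rfl⟩ := hB
            exact e1 hrd
        · intro hC; rcases mem_of_locUpd_s18 hupd hC with hC | hC
          · exact e4 hC
          · exact absurd hC (by simp)
      · exact absurd hx (by simp)
    · intro hx; rcases mem_of_locUpd_s18 hupd hx with hx | hx
      · exact h6 hx
      · exact absurd hx (by simp)
  -- case 4: B --read^{-1} a--> C
  · obtain ⟨hik, hrd, hw, hupd⟩ := hm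
    intro k
    obtain ⟨h1, h2, h3, h4, h5, h6⟩ := hI k
    rw [hw]
    refine ⟨?_, ?_, ?_, ?_, ?_, ?_⟩
    · intro hx; rcases mem_of_locUpd_s18 hupd hx with hx | hx
      · exact h1 hx
      · exact absurd hx (by simp)
    · intro hx; rcases mem_of_locUpd_s18 hupd hx with hx | hx
      · exact h2 hx
      · exact absurd hx (by simp)
    · intro hx; rcases mem_of_locUpd_s18 hupd hx with hx | hx
      · exact h3 hx
      · rw [Prod.mk.injEq] at hx; obtain ⟨-, rfl⟩ := hx
        exact (hI k).2.1 hsrc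
    · intro hx; rcases mem_of_locUpd_s18 hupd hx with hx | hx
      · exact h4 hx
      · exact absurd hx (by simp)
    · intro hx; rcases mem_of_locUpd_s18 hupd hx with hx | hx
      · obtain ⟨e1, e2, e3, e4⟩ := h5 hx
        refine ⟨e1, e2, ?_, ?_⟩
        · intro hB; rcases mem_of_locUpd_s18 hupd hB with hB | hB
          · exact e3 hB
          · exact absurd hB (by simp)
        · intro hC; rcases mem_of_locUpd_s18 hupd hC with hC | hC
          · exact e4 hC
          · rw [Prod.mk.injEq] at hC; obtain ⟨-, rfl⟩ := hC
            exact e3 hsrc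
      · exact absurd hx (by simp)
    · intro hx; rcases mem_of_locUpd_s18 hupd hx with hx | hx
      · exact h6 hx
      · exact absurd hx (by simp)
  -- case 5: C --write b--> q0
  · obtain ⟨hw, hupd⟩ := hm
    intro k
    obtain ⟨h1, h2, h3, h4, h5, h6⟩ := hI k
    rw [hw]
    refine ⟨?_, ?_, ?_, ?_, ?_, ?_⟩
    · intro hx; rcases mem_of_locUpd_s18 hupd hx with hx | hx
      · exact upd_ne (by decide) (h1 hx)
      · exact absurd hx (by simp)
    · intro hx; rcases mem_of_locUpd_s18 hupd hx with hx | hx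
      · exact upd_ne (by decide) (h2 hx)
      · exact absurd hx (by simp)
    · intro hx; rcases mem_of_locUpd_s18 hupd hx with hx | hx
      · exact upd_ne (by decide) (h3 hx)
      · exact absurd hx (by simp)
    · intro hx; rcases mem_of_locUpd_s18 hupd hx with hx | hx
      · exact upd_ne (by decide) (h4 hx)
      · exact absurd hx (by simp)
    · intro hx; rcases mem_of_locUpd_s18 hupd hx with hx | hx
      · obtain ⟨e1, e2, e3, e4⟩ := h5 hx
        refine ⟨upd_ne (by decide) e1, ?_, ?_, ?_⟩
        · rcases eq_or_ne k k₀ with rfl | hk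
          · exact absurd hsrc e4
          · rw [Function.update_of_ne (by simp [hk])]; exact e2
        · intro hB; rcases mem_of_locUpd_s18 hupd hB with hB | hB
          · exact e3 hB
          · exact absurd hB (by simp)
        · intro hC; rcases mem_of_locUpd_s18 hupd hC with hC | hC
          · exact e4 hC
          · exact absurd hC (by simp)
      · exact absurd hx (by simp)
    · intro hx; rcases mem_of_locUpd_s18 hupd hx with hx | hx
      · exact h6 hx
      · exact absurd hx (by simp)
  -- case 6: q0 --read^{-1} b--> D
  · obtain ⟨hik, hrd, hw, hupd⟩ := hm
    intro k
    obtain ⟨h1, h2, h3, h4, h5, h6⟩ := hI k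
    rw [hw]
    refine ⟨?_, ?_, ?_, ?_, ?_, ?_⟩
    · intro hx; rcases mem_of_locUpd_s18 hupd hx with hx | hx
      · exact h1 hx
      · exact absurd hx (by simp)
    · intro hx; rcases mem_of_locUpd_s18 hupd hx with hx | hx
      · exact h2 hx
      · exact absurd hx (by simp)
    · intro hx; rcases mem_of_locUpd_s18 hupd hx with hx | hx
      · exact h3 hx
      · exact absurd hx (by simp)
    · intro hx; rcases mem_of_locUpd_s18 hupd hx with hx | hx
      · exact h4 hx
      · rw [Prod.mk.injEq] at hx; obtain ⟨-, rfl⟩ := hx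
        rw [hrd]; decide
    · intro hx; rcases mem_of_locUpd_s18 hupd hx with hx | hx
      · obtain ⟨e1, e2, e3, e4⟩ := h5 hx
        refine ⟨e1, e2, ?_, ?_⟩
        · intro hB; rcases mem_of_locUpd_s18 hupd hB with hB | hB
          · exact e3 hB
          · exact absurd hB (by simp)
        · intro hC; rcases mem_of_locUpd_s18 hupd hC with hC | hC
          · exact e4 hC
          · exact absurd hC (by simp)
      · exact absurd hx (by simp)
    · intro hx; rcases mem_of_locUpd_s18 hupd hx with hx | hx
      · exact h6 hx
      · exact absurd hx (by simp)
  -- case 7: D --read^{0} d0--> E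
  · obtain ⟨hik, hrd, hw, hupd⟩ := hm
    have hrd' : a.2 (k₀, 0) = Sym3.d0 := hrd
    intro k
    obtain ⟨h1, h2, h3, h4, h5, h6⟩ := hI k
    rw [hw]
    refine ⟨?_, ?_, ?_, ?_, ?_, ?_⟩
    · intro hx; rcases mem_of_locUpd_s18 hupd hx with hx | hx
      · exact h1 hx
      · exact absurd hx (by simp)
    · intro hx; rcases mem_of_locUpd_s18 hupd hx with hx | hx
      · exact h2 hx
      · exact absurd hx (by simp)
    · intro hx; rcases mem_of_locUpd_s18 hupd hx with hx | hx
      · exact h3 hx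
      · exact absurd hx (by simp)
    · intro hx; rcases mem_of_locUpd_s18 hupd hx with hx | hx
      · exact h4 hx
      · exact absurd hx (by simp)
    · intro hx; rcases mem_of_locUpd_s18 hupd hx with hx | hx
      · obtain ⟨e1, e2, e3, e4⟩ := h5 hx
        refine ⟨e1, e2, ?_, ?_⟩
        · intro hB; rcases mem_of_locUpd_s18 hupd hB with hB | hB
          · exact e3 hB
          · exact absurd hB (by simp)
        · intro hC; rcases mem_of_locUpd_s18 hupd hC with hC | hC
          · exact e4 hC
          · exact absurd hC (by simp)
      · rw [Prod.mk.injEq] at hx; obtain ⟨-, rfl⟩ := hx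
        refine ⟨(hI k).2.2.2.1 hsrc, ?_, ?_, ?_⟩
        · rw [hrd']; decide
        · intro hB; rcases mem_of_locUpd_s18 hupd hB with hB | hB
          · exact (hI k).2.1 hB hrd'
          · exact absurd hB (by simp)
        · intro hC; rcases mem_of_locUpd_s18 hupd hC with hC | hC
          · exact (hI k).2.2.1 hC hrd'
          · exact absurd hC (by simp)
    · intro hx; rcases mem_of_locUpd_s18 hupd hx with hx | hx
      · exact h6 hx
      · exact absurd hx (by simp)
  -- case 8: E --read^{0} b--> qf (impossible)
  · obtain ⟨hik, hrd, hw, hupd⟩ := hm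
    have hrd' : a.2 (k₀, 0) = Sym3.b := hrd
    exact absurd hrd' ((hI k₀).2.2.2.2.1 hsrc).2.1

lemma RBInv_init : RBInv ({(Q7.q0, 0)}, fun _ => Sym3.d0) := by
  intro k
  refine ⟨?_, ?_, ?_, ?_, ?_, ?_⟩ <;>
    · intro hx
      simp only [Set.mem_singleton_iff, Prod.mk.injEq] at hx
      exact absurd hx.1 (by decide)

/-- `q_f` is not coverable at any round in the round-based example protocol. -/
theorem rb_qf_not_coverable :
    ∀ (L : Set (Q7 × ℕ)) (w : ℕ × Fin 1 → Sym3) (k : ℕ),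
      Relation.ReflTransGen (fun a a' => ∃ m, RStep rbTr m a a')
        ({(Q7.q0, 0)}, fun _ => Sym3.d0) (L, w) →
      (Q7.qf, k) ∉ L := by
  have key : ∀ c, Relation.ReflTransGen (fun a a' => ∃ m, RStep rbTr m a a')
      ({(Q7.q0, 0)}, fun _ => Sym3.d0) c → RBInv c := by
    intro c h
    induction h with
    | refl => exact RBInv_init
    | tail _ hstep ih =>
      obtain ⟨m, hs⟩ := hstep
      exact RBInv_step _ _ _ hs ih
  intro L w k h hqf
  exact (key (L, w) h k).2.2.2.2.2 hqf
end
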